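/- arXiv:1707.01063 — 7 statements merged into one kernel-verified Lean document; each statement's English description precedes it below -/
import Mathlib

section
/- Let D be a real diagonal m×m matrix with diagonal entries λ₁ ≥ λ₂ ≥ ⋯ ≥ λ_m, let q ≤ m, let q⁻ be the largest index with λ_{q⁻} > λ_q (with q⁻ = 0 if none exists) and q⁺ the largest index with λ_{q⁺} = λ_q. A matrix Q ∈ ℝ^{m×q} with orthonormal columns maximizes tr(Qᵀ D Q) over all such matrices if and only if the column space of Q equals ⟨e₁,…,e_{q⁻}⟩ ⊕ W, where W is some (q − q⁻)-dimensional subspace of ⟨e_{q⁻+1},…,e_{q⁺}⟩. -/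
open Matrix Module

lemma initial_seg {m : ℕ} (S : Finset (Fin m))
    (hS : ∀ i j : Fin m, i ≤ j → j ∈ S → i ∈ S) (i : Fin m) :
    i ∈ S ↔ (i : ℕ) < S.card := by
  constructor
  · intro hi
    have h1 : Finset.Iic i ⊆ S := fun j hj => hS j i (Finset.mem_Iic.mp hj) hi
    have h2 := Finset.card_le_card h1
    have h3 : (Finset.Iic i).card = (i : ℕ) + 1 := by simp
    omega
  · intro hi
    by_contra hmem
    have hsub : S ⊆ Finset.Iio i := by
      intro j hj
      rw [Finset.mem_Iio]
      by_contra hji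
      exact hmem (hS i j (le_of_not_gt hji) hj)
    have h2 := Finset.card_le_card hsub
    have h3 : (Finset.Iio i).card = (i : ℕ) := by simp
    omega

lemma mem_span_single_iff {m : ℕ} (S : Set (Fin m)) (v : Fin m → ℝ) :
    v ∈ Submodule.span ℝ ((fun i : Fin m => (Pi.single i 1 : Fin m → ℝ)) '' S)
      ↔ ∀ i ∉ S, v i = 0 := by
  classical
  constructor
  · intro hv
    have hle : Submodule.span ℝ ((fun i : Fin m => (Pi.single i 1 : Fin m → ℝ)) '' S)
        ≤ Submodule.pi Sᶜ (fun _ => ⊥) := by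
      rw [Submodule.span_le]
      rintro _ ⟨i, hi, rfl⟩
      intro j hj
      have hne : j ≠ i := by rintro rfl; exact hj hi
      simp [Pi.single_apply, hne]
    have h := hle hv
    intro i hiS
    simpa using h i hiS
  · intro hv
    have hrep : v = ∑ i : Fin m, Pi.single i (v i) := (Finset.univ_sum_single v).symm
    rw [hrep]
    refine Submodule.sum_mem _ ?_
    intro i _
    by_cases hiS : i ∈ S
    · have hsc : Pi.single i (v i) = (v i) • (Pi.single i 1 : Fin m → ℝ) := by
        ext j; by_cases h : j = i <;> simp [Pi.single_apply, h]
      rw [hsc]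
      exact Submodule.smul_mem _ _ (Submodule.subset_span ⟨i, hiS, rfl⟩)
    · rw [hv i hiS]
      simp

lemma card_filter_coe_lt {m : ℕ} (c : ℕ) (hc : c ≤ m) :
    (Finset.univ.filter (fun i : Fin m => (i : ℕ) < c)).card = c := by
  classical
  have himg : (Finset.univ.filter (fun i : Fin m => (i : ℕ) < c))
      = Finset.image (Fin.castLE hc) Finset.univ := by
    ext i
    simp only [Finset.mem_filter, Finset.mem_univ, true_and, Finset.mem_image]
    constructor
    · intro hi
      exact ⟨⟨(i : ℕ), hi⟩, by ext; simp⟩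
    · rintro ⟨j, -, rfl⟩
      simpa using j.2
  rw [himg, Finset.card_image_of_injective _ (Fin.castLE_injective hc)]
  simp

lemma finrank_span_single {m : ℕ} (S : Set (Fin m)) [Fintype ↑S] :
    finrank ℝ (Submodule.span ℝ ((fun i : Fin m => (Pi.single i 1 : Fin m → ℝ)) '' S))
      = S.toFinset.card := by
  classical
  have hli : LinearIndependent ℝ (fun i : S => (Pi.single (i : Fin m) 1 : Fin m → ℝ)) := by
    have hb := (Pi.basisFun ℝ (Fin m)).linearIndependent
    have heq : (fun i : S => (Pi.single (i : Fin m) 1 : Fin m → ℝ))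
        = (Pi.basisFun ℝ (Fin m)) ∘ (Subtype.val : S → Fin m) := by
      funext i; simp
    rw [heq]
    exact hb.comp _ Subtype.val_injective
  have hset : ((fun i : Fin m => (Pi.single i 1 : Fin m → ℝ)) '' S)
      = Set.range (fun i : S => (Pi.single (i : Fin m) 1 : Fin m → ℝ)) := by
    rw [Set.image_eq_range]
  rw [hset, finrank_span_set_eq_card ((linearIndepOn_id_range_iff hli.injective).mpr hli)]
  rw [Set.toFinset_range, Finset.card_image_of_injective _ hli.injective]
  simp [Set.toFinset_card]
lemma trace_formula {m q : ℕ} (lam : Fin m → ℝ) (Q' : Matrix (Fin m) (Fin q) ℝ) :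
    Matrix.trace (Q'ᵀ * Matrix.diagonal lam * Q')
      = ∑ i : Fin m, lam i * ∑ j : Fin q, (Q' i j)^2 := by
  have h1 : ∀ j : Fin q, (Q'ᵀ * Matrix.diagonal lam * Q') j j
      = ∑ k : Fin m, lam k * (Q' k j)^2 := by
    intro j
    rw [Matrix.mul_apply]
    refine Finset.sum_congr rfl fun k _ => ?_
    rw [Matrix.mul_diagonal, Matrix.transpose_apply]
    ring
  calc Matrix.trace (Q'ᵀ * Matrix.diagonal lam * Q')
      = ∑ j : Fin q, ∑ k : Fin m, lam k * (Q' k j)^2 := by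
        rw [Matrix.trace]; exact Finset.sum_congr rfl fun j _ => h1 j
    _ = ∑ k : Fin m, ∑ j : Fin q, lam k * (Q' k j)^2 := Finset.sum_comm
    _ = ∑ k : Fin m, lam k * ∑ j : Fin q, (Q' k j)^2 :=
        Finset.sum_congr rfl fun k _ => (Finset.mul_sum _ _ _).symm

lemma sum_rows_sq {m q : ℕ} (Q' : Matrix (Fin m) (Fin q) ℝ) (h : Q'ᵀ * Q' = 1) :
    ∑ i : Fin m, ∑ j : Fin q, (Q' i j)^2 = q := by
  rw [Finset.sum_comm]
  have h1 : ∀ j : Fin q, ∑ i : Fin m, (Q' i j)^2 = (1 : Matrix (Fin q) (Fin q) ℝ) j j := by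
    intro j
    rw [← h, Matrix.mul_apply]
    exact Finset.sum_congr rfl fun i _ => by rw [Matrix.transpose_apply]; ring
  rw [Finset.sum_congr rfl fun j _ => h1 j]
  simp [Matrix.one_apply]

lemma row_sq_nonneg {m q : ℕ} (Q' : Matrix (Fin m) (Fin q) ℝ) (i : Fin m) :
    0 ≤ ∑ j : Fin q, (Q' i j)^2 :=
  Finset.sum_nonneg fun j _ => sq_nonneg _

lemma row_sq_le_one {m q : ℕ} (Q' : Matrix (Fin m) (Fin q) ℝ) (h : Q'ᵀ * Q' = 1) (i : Fin m) :
    ∑ j : Fin q, (Q' i j)^2 ≤ 1 := by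
  set P := Q' * Q'ᵀ with hP
  have hPP : P * P = P := by
    rw [hP, Matrix.mul_assoc, ← Matrix.mul_assoc Q'ᵀ Q' Q'ᵀ, h, Matrix.one_mul]
  have hsym : ∀ a b, P a b = P b a := fun a b => by
    rw [hP, Matrix.mul_apply, Matrix.mul_apply]
    exact Finset.sum_congr rfl fun k _ => by rw [Matrix.transpose_apply, Matrix.transpose_apply]; ring
  have hp : P i i = ∑ j : Fin q, (Q' i j)^2 := by
    rw [hP, Matrix.mul_apply]
    exact Finset.sum_congr rfl fun j _ => by rw [Matrix.transpose_apply]; ring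
  have hkey : P i i = ∑ k : Fin m, (P i k)^2 := by
    conv_lhs => rw [← hPP]
    rw [Matrix.mul_apply]
    exact Finset.sum_congr rfl fun k _ => by rw [hsym k i]; ring
  have h1 : (P i i)^2 ≤ ∑ k : Fin m, (P i k)^2 :=
    Finset.single_le_sum (f := fun k => (P i k)^2) (fun k _ => sq_nonneg _) (Finset.mem_univ i)
  have h0 : 0 ≤ ∑ j : Fin q, (Q' i j)^2 := row_sq_nonneg Q' i
  nlinarith [sq_nonneg (P i i - 1)]

lemma exists_max_matrix {m q : ℕ} (hq0 : 0 < q) (hq : q ≤ m) (lam : Fin m → ℝ) :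
    ∃ Q0 : Matrix (Fin m) (Fin q) ℝ, Q0ᵀ * Q0 = 1 ∧
      ∑ i : Fin m, lam i * ∑ j : Fin q, (Q0 i j)^2
        = ∑ i ∈ Finset.univ.filter (fun i : Fin m => (i : ℕ) < q), lam i := by
  classical
  set Q0 : Matrix (Fin m) (Fin q) ℝ :=
    Matrix.of (fun i j => if (i : ℕ) = (j : ℕ) then 1 else 0) with hQ0
  refine ⟨Q0, ?_, ?_⟩
  · ext a b
    rw [Matrix.mul_apply, Matrix.one_apply]
    rw [Finset.sum_eq_single (⟨(a : ℕ), lt_of_lt_of_le a.2 hq⟩ : Fin m)]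
    · by_cases hab : (a : ℕ) = (b : ℕ)
      · simp [hQ0, hab, Fin.ext_iff]
      · have hne : a ≠ b := fun h => hab (congrArg Fin.val h)
        simp [hQ0, hab, hne]
    · intro i _ hne
      have hia : (i : ℕ) ≠ (a : ℕ) := by
        intro hcontra; exact hne (by ext; simpa using hcontra)
      simp [hQ0, Matrix.transpose_apply, hia]
    · intro h; exact absurd (Finset.mem_univ _) h
  · have hrow : ∀ i : Fin m,
        ∑ j : Fin q, (Q0 i j)^2 = if (i : ℕ) < q then 1 else 0 := by
      intro i
      by_cases hi : (i : ℕ) < q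
      · rw [if_pos hi, Finset.sum_eq_single (⟨(i : ℕ), hi⟩ : Fin q)]
        · simp [hQ0]
        · intro j _ hne
          have : (i : ℕ) ≠ (j : ℕ) := fun hc => hne (by ext; simpa using hc.symm)
          simp [hQ0, this]
        · intro h; exact absurd (Finset.mem_univ _) h
      · rw [if_neg hi]
        refine Finset.sum_eq_zero fun j _ => ?_
        have : (i : ℕ) ≠ (j : ℕ) := by have := j.2; omega
        simp [hQ0, this]
    rw [Finset.sum_congr rfl fun i _ => by rw [hrow i]]
    rw [Finset.sum_filter]
    exact Finset.sum_congr rfl fun i _ => by by_cases hi : (i : ℕ) < q <;> simp [hi]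

theorem stmt_6 {m q : ℕ} (hq0 : 0 < q) (hq : q ≤ m) (lam : Fin m → ℝ)
    (hlam : ∀ i j : Fin m, i ≤ j → lam j ≤ lam i)
    (qminus qplus : ℕ)
    (hqm : qminus = (Finset.univ.filter
      (fun i : Fin m => lam (⟨q - 1, by omega⟩ : Fin m) < lam i)).card)
    (hqp : qplus = (Finset.univ.filter
      (fun i : Fin m => lam (⟨q - 1, by omega⟩ : Fin m) ≤ lam i)).card)
    (Q : Matrix (Fin m) (Fin q) ℝ) (hQ : Qᵀ * Q = 1) :
    (∀ Q' : Matrix (Fin m) (Fin q) ℝ, Q'ᵀ * Q' = 1 →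
        Matrix.trace (Q'ᵀ * Matrix.diagonal lam * Q')
          ≤ Matrix.trace (Qᵀ * Matrix.diagonal lam * Q))
      ↔ ∃ W : Submodule ℝ (Fin m → ℝ),
          W ≤ Submodule.span ℝ
            ((fun i : Fin m => (Pi.single i 1 : Fin m → ℝ)) ''
              {i : Fin m | qminus ≤ (i : ℕ) ∧ (i : ℕ) < qplus}) ∧
          finrank ℝ W = q - qminus ∧
          LinearMap.range Q.mulVecLin
            = Submodule.span ℝ
                ((fun i : Fin m => (Pi.single i 1 : Fin m → ℝ)) ''
                  {i : Fin m | (i : ℕ) < qminus}) ⊔ W := by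
  classical
  have hiqlt : q - 1 < m := by omega
  set iq : Fin m := ⟨q - 1, hiqlt⟩ with hiqdef
  -- characterization of qminus and qplus as initial segments
  have keyA : ∀ i : Fin m, lam iq < lam i ↔ (i : ℕ) < qminus := by
    intro i
    rw [hqm]
    have hIS := initial_seg (Finset.univ.filter
      (fun i : Fin m => lam (⟨q - 1, by omega⟩ : Fin m) < lam i))
      (fun a b hab hb => by
        simp only [Finset.mem_filter, Finset.mem_univ, true_and] at hb ⊢
        exact lt_of_lt_of_le hb (hlam a b hab)) i
    simp only [Finset.mem_filter, Finset.mem_univ, true_and] at hIS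
    exact hIS
  have keyB : ∀ i : Fin m, lam iq ≤ lam i ↔ (i : ℕ) < qplus := by
    intro i
    rw [hqp]
    have hIS := initial_seg (Finset.univ.filter
      (fun i : Fin m => lam (⟨q - 1, by omega⟩ : Fin m) ≤ lam i))
      (fun a b hab hb => by
        simp only [Finset.mem_filter, Finset.mem_univ, true_and] at hb ⊢
        exact le_trans hb (hlam a b hab)) i
    simp only [Finset.mem_filter, Finset.mem_univ, true_and] at hIS
    exact hIS
  have hqm_lt_q : qminus < q := by
    by_contra h
    push_neg at h
    have h2 : ((iq : ℕ)) < qminus := by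
      simp only [hiqdef]
      omega
    exact lt_irrefl (lam iq) ((keyA iq).mpr h2)
  have hq_le_qp : q ≤ qplus := by
    have h2 := (keyB iq).mp (le_refl (lam iq))
    simp only [hiqdef] at h2
    omega
  have hqp_le_m : qplus ≤ m := by
    rw [hqp]
    exact le_trans (Finset.card_filter_le _ _) (by simp)
  -- the fundamental identity
  have identity : ∀ p : Fin m → ℝ, (∑ i, p i) = (q : ℝ) →
      (∑ i ∈ Finset.univ.filter (fun i : Fin m => (i : ℕ) < q), lam i) - ∑ i, lam i * p i
        = ∑ i : Fin m, ((if (i : ℕ) < q then lam i - lam iq else 0) - (lam i - lam iq) * p i) := by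
    intro p hp
    have e1 : ∑ i : Fin m, (if (i : ℕ) < q then lam i - lam iq else 0)
        = (∑ i ∈ Finset.univ.filter (fun i : Fin m => (i : ℕ) < q), lam i) - lam iq * q := by
      rw [← Finset.sum_filter, Finset.sum_sub_distrib, Finset.sum_const, card_filter_coe_lt q hq,
        nsmul_eq_mul]
      ring
    have e2 : ∑ i : Fin m, (lam i - lam iq) * p i
        = (∑ i : Fin m, lam i * p i) - lam iq * q := by
      rw [Finset.sum_congr rfl fun i _ => (by ring :
        (lam i - lam iq) * p i = lam i * p i - lam iq * p i),
        Finset.sum_sub_distrib, ← Finset.mul_sum, hp]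
    rw [Finset.sum_sub_distrib, e1, e2]
    ring
  have term_nonneg : ∀ p : Fin m → ℝ, (∀ i, 0 ≤ p i) → (∀ i, p i ≤ 1) →
      ∀ i ∈ (Finset.univ : Finset (Fin m)), (0:ℝ) ≤ (if (i : ℕ) < q then lam i - lam iq else 0) - (lam i - lam iq) * p i := by
    intro p h0 h1 i _
    by_cases hi : (i : ℕ) < q
    · rw [if_pos hi]
      have hci : lam iq ≤ lam i := hlam i iq (by rw [Fin.le_def]; simp only [hiqdef]; omega)
      nlinarith [h1 i, h0 i]
    · rw [if_neg hi]
      have hic : lam i ≤ lam iq := hlam iq i (by rw [Fin.le_def]; simp only [hiqdef]; omega)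
      nlinarith [h0 i]
  -- upper bound
  have upper : ∀ Q' : Matrix (Fin m) (Fin q) ℝ, Q'ᵀ * Q' = 1 →
      Matrix.trace (Q'ᵀ * Matrix.diagonal lam * Q')
        ≤ ∑ i ∈ Finset.univ.filter (fun i : Fin m => (i : ℕ) < q), lam i := by
    intro Q' hQ'
    rw [trace_formula]
    have hid := identity (fun i => ∑ j, (Q' i j)^2) (sum_rows_sq Q' hQ')
    have hnn := Finset.sum_nonneg (term_nonneg (fun i => ∑ j, (Q' i j)^2)
      (fun i => row_sq_nonneg Q' i) (fun i => row_sq_le_one Q' hQ' i))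
    linarith
  -- maximality iff trace equals the max value
  have max_iff : (∀ Q' : Matrix (Fin m) (Fin q) ℝ, Q'ᵀ * Q' = 1 →
        Matrix.trace (Q'ᵀ * Matrix.diagonal lam * Q')
          ≤ Matrix.trace (Qᵀ * Matrix.diagonal lam * Q))
      ↔ Matrix.trace (Qᵀ * Matrix.diagonal lam * Q)
          = ∑ i ∈ Finset.univ.filter (fun i : Fin m => (i : ℕ) < q), lam i := by
    constructor
    · intro hmax
      obtain ⟨Q0, hQ0, hQ0tr⟩ := exists_max_matrix hq0 hq lam
      have h1 := hmax Q0 hQ0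
      have h2 := upper Q hQ
      have h3 : Matrix.trace (Q0ᵀ * Matrix.diagonal lam * Q0)
          = ∑ i ∈ Finset.univ.filter (fun i : Fin m => (i : ℕ) < q), lam i := by
        rw [trace_formula]; exact hQ0tr
      linarith
    · intro heq Q' hQ'
      rw [heq]; exact upper Q' hQ'
  -- equality iff row-norm conditions
  have cond_iff : Matrix.trace (Qᵀ * Matrix.diagonal lam * Q)
        = (∑ i ∈ Finset.univ.filter (fun i : Fin m => (i : ℕ) < q), lam i)
      ↔ ((∀ i : Fin m, (i : ℕ) < qminus → ∑ j, (Q i j)^2 = 1) ∧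
         (∀ i : Fin m, qplus ≤ (i : ℕ) → ∑ j, (Q i j)^2 = 0)) := by
    rw [trace_formula]
    have hid := identity (fun i => ∑ j, (Q i j)^2) (sum_rows_sq Q hQ)
    have hnng := term_nonneg (fun i => ∑ j, (Q i j)^2)
      (fun i => row_sq_nonneg Q i) (fun i => row_sq_le_one Q hQ i)
    constructor
    · intro heq
      have hzero : ∑ i : Fin m, ((if (i : ℕ) < q then lam i - lam iq else 0)
          - (lam i - lam iq) * ∑ j, (Q i j)^2) = 0 := by linarith
      have hterm := (Finset.sum_eq_zero_iff_of_nonneg hnng).mp hzero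
      constructor
      · intro i hi
        have hf := hterm i (Finset.mem_univ i)
        have hiq' : (i : ℕ) < q := by omega
        rw [if_pos hiq'] at hf
        have hlt : lam iq < lam i := (keyA i).mpr hi
        have hmul : (lam i - lam iq) * (1 - ∑ j, (Q i j)^2) = 0 := by linarith
        rcases mul_eq_zero.mp hmul with h | h
        · linarith
        · linarith
      · intro i hi
        have hf := hterm i (Finset.mem_univ i)
        have hiq' : ¬ (i : ℕ) < q := by omega
        rw [if_neg hiq'] at hf
        have hlt : lam i < lam iq := lt_of_not_ge (fun hc => by have := (keyB i).mp hc; omega)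
        have hmul : (lam iq - lam i) * (∑ j, (Q i j)^2) = 0 := by linarith
        rcases mul_eq_zero.mp hmul with h | h
        · linarith
        · exact h
    · rintro ⟨hp1, hp0⟩
      have hzero : ∀ i ∈ (Finset.univ : Finset (Fin m)), ((if (i : ℕ) < q then lam i - lam iq else 0)
          - (lam i - lam iq) * ∑ j, (Q i j)^2) = 0 := by
        intro i _
        by_cases hiq' : (i : ℕ) < q
        · rw [if_pos hiq']
          by_cases hi : (i : ℕ) < qminus
          · rw [hp1 i hi]; ring
          · have h1 : ¬ lam iq < lam i := fun hc => hi ((keyA i).mp hc)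
            have h2 : lam iq ≤ lam i := (keyB i).mpr (by omega)
            have he : lam i = lam iq := le_antisymm (not_lt.mp h1) h2
            rw [he]; ring
        · rw [if_neg hiq']
          by_cases hi : (i : ℕ) < qplus
          · have h2 : lam iq ≤ lam i := (keyB i).mpr hi
            have h1 : lam i ≤ lam iq := hlam iq i (by rw [Fin.le_def]; simp only [hiqdef]; omega)
            have he : lam i = lam iq := le_antisymm h1 h2
            rw [he]; ring
          · rw [hp0 i (by omega)]; ring
      have hsz := Finset.sum_eq_zero hzero
      linarith
  rw [max_iff, cond_iff]
  -- now the geometric equivalence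
  have hinj : Function.Injective Q.mulVecLin := by
    have hleft : Qᵀ.mulVecLin.comp Q.mulVecLin = LinearMap.id := by
      rw [← Matrix.mulVecLin_mul, hQ, Matrix.mulVecLin_one]
    intro x y hxy
    have h2 := congrArg Qᵀ.mulVecLin hxy
    rwa [← LinearMap.comp_apply, ← LinearMap.comp_apply, hleft, LinearMap.id_apply,
      LinearMap.id_apply] at h2
  have hrank_range : finrank ℝ (LinearMap.range Q.mulVecLin) = q := by
    rw [LinearMap.finrank_range_of_inj hinj]; simp
  constructor
  · -- conditions → exists W
    rintro ⟨hp1, hp0⟩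
    have hsingle_mem : ∀ i : Fin m, (i : ℕ) < qminus →
        (Pi.single i 1 : Fin m → ℝ) ∈ LinearMap.range Q.mulVecLin := by
      intro i hi
      have hpi := hp1 i hi
      set P := Q * Qᵀ with hPdef
      have hPP : P * P = P := by
        rw [hPdef, Matrix.mul_assoc, ← Matrix.mul_assoc Qᵀ Q Qᵀ, hQ, Matrix.one_mul]
      have hsym : ∀ a b, P a b = P b a := fun a b => by
        rw [hPdef, Matrix.mul_apply, Matrix.mul_apply]
        exact Finset.sum_congr rfl fun k _ => by
          rw [Matrix.transpose_apply, Matrix.transpose_apply]; ring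
      have hPii : P i i = 1 := by
        have hpp : P i i = ∑ j : Fin q, (Q i j)^2 := by
          rw [hPdef, Matrix.mul_apply]
          exact Finset.sum_congr rfl fun j _ => by rw [Matrix.transpose_apply]; ring
        rw [hpp, hpi]
      have hsum2 : ∑ k : Fin m, P k i * P k i = 1 := by
        have h1 : ∑ k : Fin m, P k i * P k i = (P * P) i i := by
          rw [Matrix.mul_apply]
          exact Finset.sum_congr rfl fun k _ => by rw [hsym k i]
        rw [h1, hPP, hPii]
      have hcross : ∑ k : Fin m, P k i * (Pi.single i 1 : Fin m → ℝ) k = 1 := by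
        rw [Finset.sum_eq_single i]
        · simp [hPii]
        · intro k _ hki; simp [Pi.single_apply, hki]
        · intro h; exact absurd (Finset.mem_univ _) h
      have hsingle2 : ∑ k : Fin m, ((Pi.single i 1 : Fin m → ℝ) k)^2 = 1 := by
        rw [Finset.sum_eq_single i]
        · simp
        · intro k _ hki; simp [Pi.single_apply, hki]
        · intro h; exact absurd (Finset.mem_univ _) h
      have hzero : ∑ k : Fin m, (P k i - (Pi.single i 1 : Fin m → ℝ) k)^2 = 0 := by
        have hexp : ∀ k : Fin m, (P k i - (Pi.single i 1 : Fin m → ℝ) k)^2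
            = P k i * P k i - 2 * (P k i * (Pi.single i 1 : Fin m → ℝ) k)
              + ((Pi.single i 1 : Fin m → ℝ) k)^2 := fun k => by ring
        rw [Finset.sum_congr rfl fun k _ => hexp k, Finset.sum_add_distrib,
          Finset.sum_sub_distrib, hsum2, hsingle2, ← Finset.mul_sum, hcross]
        ring
      have hcol : ∀ k : Fin m, P k i = (Pi.single i 1 : Fin m → ℝ) k := by
        intro k
        have h := (Finset.sum_eq_zero_iff_of_nonneg (fun k _ => sq_nonneg _)).mp hzero
          k (Finset.mem_univ k)
        have h2 := sq_eq_zero_iff.mp h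
        linarith
      refine ⟨Qᵀ.mulVec (Pi.single i 1), ?_⟩
      have hmv : Q.mulVecLin (Qᵀ.mulVec (Pi.single i 1)) = P.mulVec (Pi.single i 1) := by
        rw [Matrix.mulVecLin_apply, Matrix.mulVec_mulVec]
      rw [hmv]
      funext k
      have hk : P.mulVec (Pi.single i 1) k = P k i := by simp [Matrix.mulVec_single]
      rw [hk, hcol k]
    have hElo_le : Submodule.span ℝ ((fun i : Fin m => (Pi.single i 1 : Fin m → ℝ)) ''
        {i : Fin m | (i : ℕ) < qminus}) ≤ LinearMap.range Q.mulVecLin := by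
      rw [Submodule.span_le]
      rintro _ ⟨i, hi, rfl⟩
      exact hsingle_mem i hi
    have hrange0 : ∀ v ∈ LinearMap.range Q.mulVecLin, ∀ i : Fin m, qplus ≤ (i : ℕ) → v i = 0 := by
      rintro v ⟨x, rfl⟩ i hi
      have hrow : ∀ j, Q i j = 0 := by
        intro j
        have h0 := hp0 i hi
        have hj := (Finset.sum_eq_zero_iff_of_nonneg
          (fun j _ => sq_nonneg (Q i j))).mp h0 j (Finset.mem_univ j)
        exact sq_eq_zero_iff.mp hj
      show Q.mulVec x i = 0
      show ∑ j, Q i j * x j = 0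
      exact Finset.sum_eq_zero fun j _ => by rw [hrow j]; ring
    set Elo := Submodule.span ℝ ((fun i : Fin m => (Pi.single i 1 : Fin m → ℝ)) ''
        {i : Fin m | (i : ℕ) < qminus}) with hElodef
    set Emid := Submodule.span ℝ ((fun i : Fin m => (Pi.single i 1 : Fin m → ℝ)) ''
        {i : Fin m | qminus ≤ (i : ℕ) ∧ (i : ℕ) < qplus}) with hEmiddef
    have hsup : LinearMap.range Q.mulVecLin = Elo ⊔ (LinearMap.range Q.mulVecLin ⊓ Emid) := by
      apply le_antisymm
      · intro v hv
        have hvlo : (fun i : Fin m => if (i : ℕ) < qminus then v i else 0) ∈ Elo := by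
          rw [hElodef]
          refine (mem_span_single_iff _ _).mpr fun i hi => ?_
          simp only [Set.mem_setOf_eq] at hi
          rw [if_neg hi]
        have hvlo_r : (fun i : Fin m => if (i : ℕ) < qminus then v i else 0)
            ∈ LinearMap.range Q.mulVecLin := hElo_le hvlo
        have hsub_r : v - (fun i : Fin m => if (i : ℕ) < qminus then v i else 0)
            ∈ LinearMap.range Q.mulVecLin := Submodule.sub_mem _ hv hvlo_r
        have hsub_mid : v - (fun i : Fin m => if (i : ℕ) < qminus then v i else 0) ∈ Emid := by
          rw [hEmiddef]
          refine (mem_span_single_iff _ _).mpr fun i hi => ?_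
          simp only [Set.mem_setOf_eq, not_and, not_lt] at hi
          by_cases h1 : (i : ℕ) < qminus
          · simp [if_pos h1]
          · have h2 : qplus ≤ (i : ℕ) := hi (le_of_not_gt h1)
            have h3 := hrange0 v hv i h2
            simp [if_neg h1, h3]
        have hfin := Submodule.add_mem (Elo ⊔ (LinearMap.range Q.mulVecLin ⊓ Emid))
          (Submodule.mem_sup_left hvlo)
          (Submodule.mem_sup_right (Submodule.mem_inf.mpr ⟨hsub_r, hsub_mid⟩))
        simpa using hfin
      · exact sup_le hElo_le inf_le_left
    have hdisj : Elo ⊓ (LinearMap.range Q.mulVecLin ⊓ Emid) = ⊥ := by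
      rw [eq_bot_iff]
      intro v hv
      obtain ⟨hva, hvb⟩ := Submodule.mem_inf.mp hv
      obtain ⟨-, hvc⟩ := Submodule.mem_inf.mp hvb
      have hv1 := (mem_span_single_iff _ _).mp (hElodef ▸ hva)
      have hv2 := (mem_span_single_iff _ _).mp (hEmiddef ▸ hvc)
      have hv0 : v = 0 := by
        funext i
        by_cases h1 : (i : ℕ) < qminus
        · exact hv2 i (by simp only [Set.mem_setOf_eq]; omega)
        · exact hv1 i (by simp only [Set.mem_setOf_eq]; omega)
      simp [hv0]
    have hrankElo : finrank ℝ Elo = qminus := by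
      rw [hElodef, finrank_span_single]
      rw [Set.toFinset_setOf]
      exact card_filter_coe_lt qminus (by omega)
    have hrankW : finrank ℝ ↥(LinearMap.range Q.mulVecLin ⊓ Emid) = q - qminus := by
      have hW := Submodule.finrank_sup_add_finrank_inf_eq Elo
        (LinearMap.range Q.mulVecLin ⊓ Emid)
      rw [← hsup, hdisj, finrank_bot, hrank_range, hrankElo] at hW
      omega
    exact ⟨LinearMap.range Q.mulVecLin ⊓ Emid, inf_le_right, hrankW, hsup⟩
  · -- exists W → conditions
    rintro ⟨W, hWle, hWrank, hrange⟩
    constructor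
    · intro i hi
      have hmem : (Pi.single i 1 : Fin m → ℝ) ∈ LinearMap.range Q.mulVecLin := by
        rw [hrange]
        exact Submodule.mem_sup_left (Submodule.subset_span ⟨i, hi, rfl⟩)
      obtain ⟨x, hx⟩ := hmem
      have hx' : Q.mulVec x = Pi.single i 1 := hx
      have hfix : (Q * Qᵀ).mulVec (Pi.single i 1) = Pi.single i 1 := by
        conv_lhs => rw [← hx']
        rw [Matrix.mulVec_mulVec, Matrix.mul_assoc, hQ, Matrix.mul_one, hx']
      have hPii : (Q * Qᵀ) i i = 1 := by
        have h1 : ((Q * Qᵀ).mulVec (Pi.single i 1)) i = (Q * Qᵀ) i i := by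
          simp [Matrix.mulVec_single]
        rw [hfix] at h1
        simpa using h1.symm
      have hpi : (Q * Qᵀ) i i = ∑ j : Fin q, (Q i j)^2 := by
        rw [Matrix.mul_apply]
        exact Finset.sum_congr rfl fun j _ => by rw [Matrix.transpose_apply]; ring
      rw [← hpi, hPii]
    · intro i hi
      have hcoord : ∀ v ∈ LinearMap.range Q.mulVecLin, v i = 0 := by
        intro v hv
        rw [hrange] at hv
        obtain ⟨a, ha, b, hb, rfl⟩ := Submodule.mem_sup.mp hv
        have ha0 : a i = 0 := (mem_span_single_iff _ _).mp ha i
          (by simp only [Set.mem_setOf_eq]; omega)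
        have hb0 : b i = 0 := (mem_span_single_iff _ _).mp (hWle hb) i
          (by simp only [Set.mem_setOf_eq]; omega)
        simp [ha0, hb0]
      have hcol : ∀ j : Fin q, Q i j = 0 := by
        intro j
        have hm : Q.mulVec (Pi.single j 1) ∈ LinearMap.range Q.mulVecLin :=
          ⟨Pi.single j 1, Matrix.mulVecLin_apply _ _⟩
        have h2 := hcoord _ hm
        simpa [Matrix.mulVec_single] using h2
      exact Finset.sum_eq_zero fun j _ => by rw [hcol j]; ring
end

section
/- Let P be a real symmetric m×m matrix whose distinct eigenvalues λ₁ > ⋯ > λ_L have multiplicities m₁,…,m_L, let q ≤ m, let k be the smallest integer with m₁+⋯+m_k ≥ q, and suppose m₁+⋯+m_k = q. If Q₀ ∈ ℝ^{m×q} with orthonormal columns maximizes tr(Qᵀ P Q) over all such matrices, then a matrix Q ∈ ℝ^{m×q} with orthonormal columns is also a maximizer if and only if Q = Q₀ B for some orthogonal matrix B ∈ ℝ^{q×q}. -/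
open Matrix Finset

private lemma sum_castLE_aux7 {m q : ℕ} (hq : q ≤ m) (g : Fin m → ℝ)
    (h : ∀ i : Fin m, q ≤ i.val → g i = 0) :
    ∑ i, g i = ∑ j : Fin q, g (Fin.castLE hq j) := by
  have key : ∑ j : Fin q, g (Fin.castLE hq j)
      = ∑ i ∈ Finset.univ.map (Fin.castLEEmb hq), g i :=
    (Finset.sum_map Finset.univ (Fin.castLEEmb hq) g).symm
  rw [key]
  refine (Finset.sum_subset (Finset.subset_univ _) ?_).symm
  intro i _ hi
  apply h
  by_contra hlt
  push_neg at hlt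
  exact hi (Finset.mem_map.2 ⟨⟨i.val, hlt⟩, Finset.mem_univ _, Fin.ext rfl⟩)

private lemma trace_form_aux7 {m q : ℕ} (mu : Fin m → ℝ) (R : Matrix (Fin m) (Fin q) ℝ) :
    Matrix.trace (Rᵀ * Matrix.diagonal mu * R) = ∑ i, mu i * ∑ j, (R i j)^2 := by
  rw [Matrix.mul_assoc, Matrix.trace_mul_comm]
  simp only [Matrix.trace, Matrix.diag, Matrix.mul_apply, Matrix.diagonal_apply,
    Matrix.transpose_apply]
  refine Finset.sum_congr rfl fun i _ => ?_
  rw [Finset.mul_sum]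
  refine Finset.sum_congr rfl fun j _ => ?_
  simp [ite_mul, Finset.sum_ite_eq, sq]
  ring

private lemma s_le_one_aux7 {m q : ℕ} (R : Matrix (Fin m) (Fin q) ℝ) (hR : Rᵀ * R = 1)
    (i : Fin m) : ∑ j, (R i j)^2 ≤ 1 := by
  set M := R * Rᵀ with hM
  have hidem : M * M = M := by
    rw [hM, Matrix.mul_assoc, ← Matrix.mul_assoc Rᵀ, hR, Matrix.one_mul]
  have hMii : M i i = ∑ j, (R i j)^2 := by
    simp [hM, Matrix.mul_apply, sq]
  have hsymm : ∀ k, M k i = M i k := by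
    intro k
    simp only [hM, Matrix.mul_apply, Matrix.transpose_apply]
    exact Finset.sum_congr rfl fun j _ => mul_comm _ _
  have h1 : M i i = ∑ k, (M i k)^2 := by
    conv_lhs => rw [← hidem]
    simp only [Matrix.mul_apply]
    refine Finset.sum_congr rfl fun k _ => ?_
    rw [hsymm k, sq]
  have hsq : (M i i)^2 ≤ M i i :=
    h1.symm ▸ Finset.single_le_sum (f := fun k => (M i k)^2)
      (fun k _ => sq_nonneg _) (Finset.mem_univ i)
  nlinarith [hMii, hsq, Finset.sum_nonneg (fun j (_ : j ∈ Finset.univ) => sq_nonneg (R i j))]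

private lemma s_sum_aux7 {m q : ℕ} (R : Matrix (Fin m) (Fin q) ℝ) (hR : Rᵀ * R = 1) :
    ∑ i, ∑ j, (R i j)^2 = (q : ℝ) := by
  have h : Matrix.trace (Rᵀ * R) = (q:ℝ) := by rw [hR]; simp
  calc ∑ i, ∑ j, (R i j)^2 = ∑ j, ∑ i, (R i j)^2 := Finset.sum_comm
    _ = Matrix.trace (Rᵀ * R) := by
        simp only [Matrix.trace, Matrix.diag, Matrix.mul_apply, Matrix.transpose_apply, sq]
    _ = (q:ℝ) := h

section BoundAux7
variable {m q : ℕ} (hq0 : 0 < q) (hq : q ≤ m) (mu : Fin m → ℝ)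
  (hmu : ∀ i j : Fin m, i ≤ j → mu j ≤ mu i)
  (s : Fin m → ℝ) (h0 : ∀ i, 0 ≤ s i) (h1 : ∀ i, s i ≤ 1)
  (hsum : ∑ i, s i = (q : ℝ))

include hq0 hq hmu h0 h1 hsum

private lemma mu_sum_le_aux7 :
    ∑ i, mu i * s i ≤ ∑ j : Fin q, mu (Fin.castLE hq j) := by
  set c : ℝ := mu ⟨q-1, by omega⟩ with hc
  set g : Fin m → ℝ := fun i => if i.val < q then mu i - c else 0 with hg
  have hfg : ∀ i : Fin m, (mu i - c) * s i ≤ g i := by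
    intro i
    by_cases hi : i.val < q
    · simp only [hg, if_pos hi]
      have hmuc : c ≤ mu i := hmu i ⟨q-1, by omega⟩ (by simp [Fin.le_def]; omega)
      nlinarith [h0 i, h1 i]
    · simp only [hg, if_neg hi]
      have hmuc : mu i ≤ c := hmu ⟨q-1, by omega⟩ i (by simp [Fin.le_def]; omega)
      nlinarith [h0 i]
  have hsplit : ∑ i, mu i * s i = (∑ i, (mu i - c) * s i) + c * (q : ℝ) := by
    rw [← hsum, Finset.mul_sum, ← Finset.sum_add_distrib]
    exact Finset.sum_congr rfl fun i _ => by ring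
  have hgsum : ∑ i, g i = (∑ j : Fin q, mu (Fin.castLE hq j)) - c * (q : ℝ) := by
    rw [sum_castLE_aux7 hq g (fun i hi => by simp only [hg]; rw [if_neg (by omega)])]
    have hval : ∀ j : Fin q, g (Fin.castLE hq j) = mu (Fin.castLE hq j) - c := by
      intro j; simp only [hg]; rw [if_pos (by simpa using j.isLt)]
    rw [Finset.sum_congr rfl (fun j _ => hval j), Finset.sum_sub_distrib]
    simp [mul_comm]
  have hle : ∑ i, (mu i - c) * s i ≤ ∑ i, g i :=
    Finset.sum_le_sum (fun i _ => hfg i)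
  rw [hsplit]
  rw [hgsum] at hle
  linarith

private lemma eq_case_aux7 (hlt : q < m)
    (hgap : mu (⟨q, hlt⟩ : Fin m) < mu (⟨q - 1, Nat.lt_of_le_of_lt (Nat.sub_le q 1) hlt⟩ : Fin m))
    (heq : ∑ i, mu i * s i = ∑ j : Fin q, mu (Fin.castLE hq j)) :
    ∀ i : Fin m, q ≤ i.val → s i = 0 := by
  set c : ℝ := mu ⟨q-1, by omega⟩ with hc
  set g : Fin m → ℝ := fun i => if i.val < q then mu i - c else 0 with hg
  have hfg : ∀ i : Fin m, (mu i - c) * s i ≤ g i := by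
    intro i
    by_cases hi : i.val < q
    · simp only [hg, if_pos hi]
      have hmuc : c ≤ mu i := hmu i ⟨q-1, by omega⟩ (by simp [Fin.le_def]; omega)
      nlinarith [h0 i, h1 i]
    · simp only [hg, if_neg hi]
      have hmuc : mu i ≤ c := hmu ⟨q-1, by omega⟩ i (by simp [Fin.le_def]; omega)
      nlinarith [h0 i]
  have hsplit : ∑ i, mu i * s i = (∑ i, (mu i - c) * s i) + c * (q : ℝ) := by
    rw [← hsum, Finset.mul_sum, ← Finset.sum_add_distrib]
    exact Finset.sum_congr rfl fun i _ => by ring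
  have hgsum : ∑ i, g i = (∑ j : Fin q, mu (Fin.castLE hq j)) - c * (q : ℝ) := by
    rw [sum_castLE_aux7 hq g (fun i hi => by simp only [hg]; rw [if_neg (by omega)])]
    have hval : ∀ j : Fin q, g (Fin.castLE hq j) = mu (Fin.castLE hq j) - c := by
      intro j; simp only [hg]; rw [if_pos (by simpa using j.isLt)]
    rw [Finset.sum_congr rfl (fun j _ => hval j), Finset.sum_sub_distrib]
    simp [mul_comm]
  have hsumeq : ∑ i, (mu i - c) * s i = ∑ i, g i := by
    rw [hgsum]; rw [hsplit] at heq; linarith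
  have hptwise : ∀ i ∈ Finset.univ, (mu i - c) * s i = g i :=
    (Finset.sum_eq_sum_iff_of_le (fun i _ => hfg i)).1 hsumeq
  intro i hi
  have h := hptwise i (Finset.mem_univ i)
  rw [hg] at h
  simp only [if_neg (by omega : ¬ i.val < q)] at h
  have hmui : mu i ≤ mu ⟨q, hlt⟩ := hmu ⟨q, hlt⟩ i (by simp [Fin.le_def]; omega)
  have hneg : mu i - c < 0 := by rw [hc]; linarith
  rcases mul_eq_zero.1 h with h' | h'
  · linarith
  · exact h'

end BoundAux7

private lemma compress_aux7 {m q : ℕ} (hq : q ≤ m) (R : Matrix (Fin m) (Fin q) ℝ)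
    (hR : Rᵀ*R = 1) (hz : ∀ i : Fin m, q ≤ i.val → ∀ j, R i j = 0) :
    (R.submatrix (Fin.castLE hq) id)ᵀ * (R.submatrix (Fin.castLE hq) id) = 1 := by
  ext j k
  have h1 : (Rᵀ*R) j k = (1:Matrix (Fin q) (Fin q) ℝ) j k := by rw [hR]
  simp only [Matrix.mul_apply, Matrix.transpose_apply, Matrix.submatrix_apply, id] at h1 ⊢
  rw [← h1]
  exact (sum_castLE_aux7 hq (fun i => R i j * R i k)
    (fun i hi => by show R i j * R i k = 0; rw [hz i hi j, zero_mul])).symm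

theorem stmt_7 {m q : ℕ} (hq0 : 0 < q) (hq : q ≤ m)
    (P : Matrix (Fin m) (Fin m) ℝ) (hP : Pᵀ = P)
    (U : Matrix (Fin m) (Fin m) ℝ) (hU : Uᵀ * U = 1)
    (mu : Fin m → ℝ) (hmu : ∀ i j : Fin m, i ≤ j → mu j ≤ mu i)
    (hdiag : P = U * Matrix.diagonal mu * Uᵀ)
    -- the q-th and (q+1)-th largest eigenvalues (with multiplicity) differ,
    -- i.e. m₁ + ⋯ + m_k = q for the smallest k with m₁ + ⋯ + m_k ≥ q
    (hgap : ∀ h : q < m, mu (⟨q, h⟩ : Fin m) < mu (⟨q - 1, by omega⟩ : Fin m))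
    (Q₀ : Matrix (Fin m) (Fin q) ℝ) (hQ₀ : Q₀ᵀ * Q₀ = 1)
    (hmax : ∀ Q' : Matrix (Fin m) (Fin q) ℝ, Q'ᵀ * Q' = 1 →
      Matrix.trace (Q'ᵀ * P * Q') ≤ Matrix.trace (Q₀ᵀ * P * Q₀))
    (Q : Matrix (Fin m) (Fin q) ℝ) (hQ : Qᵀ * Q = 1) :
    (∀ Q' : Matrix (Fin m) (Fin q) ℝ, Q'ᵀ * Q' = 1 →
        Matrix.trace (Q'ᵀ * P * Q') ≤ Matrix.trace (Qᵀ * P * Q))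
      ↔ ∃ B : Matrix (Fin q) (Fin q) ℝ, Bᵀ * B = 1 ∧ Q = Q₀ * B := by
  have hUU : U * Uᵀ = 1 := mul_eq_one_comm.mp hU
  -- general facts for any Q' with orthonormal columns
  have hRorth : ∀ Q' : Matrix (Fin m) (Fin q) ℝ, Q'ᵀ * Q' = 1 →
      (Uᵀ * Q')ᵀ * (Uᵀ * Q') = 1 := by
    intro Q' hQ'
    rw [Matrix.transpose_mul, Matrix.transpose_transpose, Matrix.mul_assoc,
      ← Matrix.mul_assoc U, hUU, Matrix.one_mul, hQ']
  have htr : ∀ Q' : Matrix (Fin m) (Fin q) ℝ,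
      Matrix.trace (Q'ᵀ * P * Q') = ∑ i, mu i * ∑ j, ((Uᵀ * Q') i j)^2 := by
    intro Q'
    rw [← trace_form_aux7]
    congr 1
    rw [hdiag, Matrix.transpose_mul, Matrix.transpose_transpose]
    simp only [Matrix.mul_assoc]
  set Mx : ℝ := ∑ j : Fin q, mu (Fin.castLE hq j) with hMx
  -- upper bound
  have hub : ∀ Q' : Matrix (Fin m) (Fin q) ℝ, Q'ᵀ * Q' = 1 →
      Matrix.trace (Q'ᵀ * P * Q') ≤ Mx := by
    intro Q' hQ'
    rw [htr Q']
    exact mu_sum_le_aux7 hq0 hq mu hmu (fun i => ∑ j, ((Uᵀ * Q') i j)^2)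
      (fun i => Finset.sum_nonneg fun j _ => sq_nonneg _)
      (fun i => s_le_one_aux7 _ (hRorth Q' hQ') i)
      (s_sum_aux7 _ (hRorth Q' hQ'))
  -- the matrix of the first q columns of U attains the bound
  set E : Matrix (Fin m) (Fin q) ℝ := U.submatrix id (Fin.castLE hq) with hE
  have hEorth : Eᵀ * E = 1 := by
    ext j k
    have h1 : (Uᵀ*U) (Fin.castLE hq j) (Fin.castLE hq k)
        = (1:Matrix (Fin m) (Fin m) ℝ) (Fin.castLE hq j) (Fin.castLE hq k) := by rw [hU]
    simp only [hE, Matrix.mul_apply, Matrix.transpose_apply, Matrix.submatrix_apply,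
      id] at h1 ⊢
    rw [h1]
    simp only [Matrix.one_apply]
    by_cases h : j = k
    · simp [h]
    · rw [if_neg h, if_neg (fun hc => h (Fin.castLE_injective hq hc))]
  have hRE : Uᵀ * E = (1 : Matrix (Fin m) (Fin m) ℝ).submatrix id (Fin.castLE hq) := by
    ext i j
    have h1 : (Uᵀ*U) i (Fin.castLE hq j)
        = (1:Matrix (Fin m) (Fin m) ℝ) i (Fin.castLE hq j) := by rw [hU]
    simp only [hE, Matrix.mul_apply, Matrix.transpose_apply, Matrix.submatrix_apply,
      id] at h1 ⊢
    exact h1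
  have hEval : Matrix.trace (Eᵀ * P * E) = Mx := by
    rw [htr E, hRE, hMx]
    have hent : ∀ (i : Fin m) (j : Fin q),
        (((1 : Matrix (Fin m) (Fin m) ℝ).submatrix id (Fin.castLE hq)) i j)^2
          = if i = Fin.castLE hq j then 1 else 0 := by
      intro i j
      simp only [Matrix.submatrix_apply, Matrix.one_apply, id]
      split <;> norm_num
    calc ∑ i, mu i * ∑ j, (((1 : Matrix (Fin m) (Fin m) ℝ).submatrix id (Fin.castLE hq)) i j)^2
        = ∑ i, ∑ j, (if i = Fin.castLE hq j then mu i else 0) := by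
          refine Finset.sum_congr rfl fun i _ => ?_
          rw [Finset.mul_sum]
          refine Finset.sum_congr rfl fun j _ => ?_
          rw [hent, mul_ite, mul_one, mul_zero]
      _ = ∑ j : Fin q, ∑ i, (if i = Fin.castLE hq j then mu i else 0) := Finset.sum_comm
      _ = ∑ j : Fin q, mu (Fin.castLE hq j) := by
          refine Finset.sum_congr rfl fun j _ => ?_
          rw [Finset.sum_ite_eq']
          simp
  have hQ₀val : Matrix.trace (Q₀ᵀ * P * Q₀) = Mx :=
    le_antisymm (hub Q₀ hQ₀) (hEval ▸ hmax E hEorth)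
  constructor
  · -- forward direction
    intro hQmax
    have hQval : Matrix.trace (Qᵀ * P * Q) = Mx :=
      le_antisymm (hub Q hQ) (hQ₀val ▸ hQmax Q₀ hQ₀)
    -- rows ≥ q of Uᵀ*Q' vanish for maximizers
    have hz : ∀ Q' : Matrix (Fin m) (Fin q) ℝ, Q'ᵀ * Q' = 1 →
        Matrix.trace (Q'ᵀ * P * Q') = Mx →
        ∀ i : Fin m, q ≤ i.val → ∀ j, (Uᵀ * Q') i j = 0 := by
      intro Q' hQ' hval i hi j
      have hsz : ∑ j, ((Uᵀ * Q') i j)^2 = 0 := by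
        rcases lt_or_ge q m with hlt | hge
        · refine eq_case_aux7 hq0 hq mu hmu (fun i => ∑ j, ((Uᵀ * Q') i j)^2)
            (fun i => Finset.sum_nonneg fun j _ => sq_nonneg _)
            (fun i => s_le_one_aux7 _ (hRorth Q' hQ') i)
            (s_sum_aux7 _ (hRorth Q' hQ')) hlt (hgap hlt) ?_ i hi
          rw [← htr Q', hval, hMx]
        · exact absurd i.isLt (by omega)
      have := (Finset.sum_eq_zero_iff_of_nonneg (fun j _ => sq_nonneg ((Uᵀ * Q') i j))).1
        hsz j (Finset.mem_univ j)
      exact pow_eq_zero_iff (by norm_num) |>.1 this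
    have hzQ := hz Q hQ hQval
    have hzQ₀ := hz Q₀ hQ₀ hQ₀val
    set R : Matrix (Fin m) (Fin q) ℝ := Uᵀ * Q with hRdef
    set R₀ : Matrix (Fin m) (Fin q) ℝ := Uᵀ * Q₀ with hR₀def
    set R1 : Matrix (Fin q) (Fin q) ℝ := R.submatrix (Fin.castLE hq) id with hR1
    set R0s : Matrix (Fin q) (Fin q) ℝ := R₀.submatrix (Fin.castLE hq) id with hR0s
    have hR1orth : R1ᵀ * R1 = 1 := compress_aux7 hq R (hRorth Q hQ) hzQ
    have hR0orth : R0sᵀ * R0s = 1 := compress_aux7 hq R₀ (hRorth Q₀ hQ₀) hzQ₀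
    have hR0sq : R0s * R0sᵀ = 1 := mul_eq_one_comm.mp hR0orth
    refine ⟨R0sᵀ * R1, ?_, ?_⟩
    · rw [Matrix.transpose_mul, Matrix.transpose_transpose, Matrix.mul_assoc,
        ← Matrix.mul_assoc R0s, hR0sq, Matrix.one_mul, hR1orth]
    · have hRB : R₀ * (R0sᵀ * R1) = R := by
        ext i j
        by_cases hi : i.val < q
        · have hieq : Fin.castLE hq ⟨i.val, hi⟩ = i := Fin.ext rfl
          have hrow : ∀ k, R₀ i k = R0s ⟨i.val, hi⟩ k := by
            intro k; rw [hR0s]; simp [Matrix.submatrix_apply, hieq]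
          calc (R₀ * (R0sᵀ * R1)) i j = ∑ k, R₀ i k * (R0sᵀ * R1) k j := by
                rw [Matrix.mul_apply]
            _ = ∑ k, R0s ⟨i.val, hi⟩ k * (R0sᵀ * R1) k j :=
                Finset.sum_congr rfl fun k _ => by rw [hrow k]
            _ = (R0s * (R0sᵀ * R1)) ⟨i.val, hi⟩ j := (Matrix.mul_apply).symm
            _ = R1 ⟨i.val, hi⟩ j := by
                rw [← Matrix.mul_assoc, hR0sq, Matrix.one_mul]
            _ = R i j := by rw [hR1]; simp [Matrix.submatrix_apply, hieq]
        · have hzr : ∀ k, R₀ i k = 0 := hzQ₀ i (by omega)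
          rw [Matrix.mul_apply]
          rw [Finset.sum_eq_zero (fun k _ => by rw [hzr k, zero_mul])]
          rw [hzQ i (by omega) j]
      have hQ₀eq : U * R₀ = Q₀ := by
        rw [hR₀def, ← Matrix.mul_assoc, hUU, Matrix.one_mul]
      have hQeq : U * R = Q := by
        rw [hRdef, ← Matrix.mul_assoc, hUU, Matrix.one_mul]
      calc Q = U * R := hQeq.symm
        _ = U * (R₀ * (R0sᵀ * R1)) := by rw [hRB]
        _ = (U * R₀) * (R0sᵀ * R1) := (Matrix.mul_assoc _ _ _).symm
        _ = Q₀ * (R0sᵀ * R1) := by rw [hQ₀eq]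
  · -- backward direction
    rintro ⟨B, hB, hQB⟩ Q' hQ'
    have hBB : B * Bᵀ = 1 := mul_eq_one_comm.mp hB
    have hform : Qᵀ * P * Q = Bᵀ * (Q₀ᵀ * P * Q₀ * B) := by
      rw [hQB, Matrix.transpose_mul]
      simp only [Matrix.mul_assoc]
    have hval : Matrix.trace (Qᵀ * P * Q) = Matrix.trace (Q₀ᵀ * P * Q₀) := by
      rw [hform, Matrix.trace_mul_comm, Matrix.mul_assoc, hBB, Matrix.mul_one]
    rw [hval]
    exact hmax Q' hQ'
end

section
/- Let Φ₁,…,Φ_K ∈ ℝ^{p×r} satisfy Φ_kᵀ Φ_k = I_r and Φ_iᵀ Φ_j + Φ_jᵀ Φ_i = 0 for i ≠ j, define A(h) := [Φ₁h … Φ_K h]. Suppose h₀, h ∈ ℝ^r with h₀ ≠ 0 and B ∈ ℝ^{K×K} satisfy A(h) = A(h₀)B. Then Bᵀ B = (‖h‖²/‖h₀‖²)·I_K; in particular, if B ≠ 0 then B is an orthogonal matrix times a positive constant. -/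
open Matrix

lemma gram_aux {p r K : ℕ} (Φ : Fin K → Matrix (Fin p) (Fin r) ℝ)
    (horth : ∀ k, (Φ k)ᵀ * Φ k = 1)
    (hanti : ∀ i j, i ≠ j → (Φ i)ᵀ * Φ j + (Φ j)ᵀ * Φ i = 0)
    (v : Fin r → ℝ) :
    (Matrix.of fun i k => (Φ k).mulVec v i)ᵀ * (Matrix.of fun i k => (Φ k).mulVec v i)
      = (∑ i, v i ^ 2) • (1 : Matrix (Fin K) (Fin K) ℝ) := by
  ext k l
  have key : ∀ a b : Fin K,
      (∑ i, (Φ a).mulVec v i * (Φ b).mulVec v i) = v ᵥ* ((Φ a)ᵀ * (Φ b)) ⬝ᵥ v := by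
    intro a b
    have : (∑ i, (Φ a).mulVec v i * (Φ b).mulVec v i) = ((Φ a) *ᵥ v) ⬝ᵥ ((Φ b) *ᵥ v) := rfl
    rw [this, dotProduct_mulVec, vecMul_mulVec]
  simp only [mul_apply, transpose_apply, of_apply, Matrix.smul_apply, Matrix.one_apply,
    smul_eq_mul]
  by_cases hkl : k = l
  · subst hkl
    rw [key, horth, if_pos rfl, mul_one]
    simp [vecMul_one, dotProduct, sq]
  · rw [if_neg hkl, mul_zero, key]
    have sym : v ᵥ* ((Φ k)ᵀ * (Φ l)) ⬝ᵥ v = v ᵥ* ((Φ l)ᵀ * (Φ k)) ⬝ᵥ v := by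
      rw [show (Φ k)ᵀ * (Φ l) = ((Φ l)ᵀ * (Φ k))ᵀ by rw [Matrix.transpose_mul, transpose_transpose],
        vecMul_transpose, dotProduct_comm, dotProduct_mulVec]
    have h2 : v ᵥ* ((Φ k)ᵀ * (Φ l)) ⬝ᵥ v + v ᵥ* ((Φ l)ᵀ * (Φ k)) ⬝ᵥ v = 0 := by
      rw [← add_dotProduct, ← vecMul_add, hanti k l hkl]
      simp
    rw [sym] at h2
    linarith [h2]

theorem stmt_12 {p r K : ℕ} (Φ : Fin K → Matrix (Fin p) (Fin r) ℝ)
    (horth : ∀ k, (Φ k)ᵀ * Φ k = 1)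
    (hanti : ∀ i j, i ≠ j → (Φ i)ᵀ * Φ j + (Φ j)ᵀ * Φ i = 0)
    (h₀ h : Fin r → ℝ) (hne : h₀ ≠ 0) (B : Matrix (Fin K) (Fin K) ℝ)
    (hAB : (Matrix.of fun i k => (Φ k).mulVec h i)
        = (Matrix.of fun i k => (Φ k).mulVec h₀ i) * B) :
    Bᵀ * B = ((∑ i, h i ^ 2) / (∑ i, h₀ i ^ 2)) • (1 : Matrix (Fin K) (Fin K) ℝ) ∧
    (B ≠ 0 → ∃ c : ℝ, 0 < c ∧ Bᵀ * B = c • (1 : Matrix (Fin K) (Fin K) ℝ)) := by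
  have g0 := gram_aux Φ horth hanti h₀
  have g1 := gram_aux Φ horth hanti h
  have hpos : 0 < ∑ i, h₀ i ^ 2 := by
    have : h₀ ≠ 0 := hne
    obtain ⟨i, hi⟩ : ∃ i, h₀ i ≠ 0 := by
      by_contra hc
      push_neg at hc
      exact this (funext hc)
    exact Finset.sum_pos' (fun j _ => sq_nonneg _) ⟨i, Finset.mem_univ i, by positivity⟩
  have main : Bᵀ * B = ((∑ i, h i ^ 2) / (∑ i, h₀ i ^ 2)) • (1 : Matrix (Fin K) (Fin K) ℝ) := by
    have e : (∑ i, h i ^ 2) • (1 : Matrix (Fin K) (Fin K) ℝ)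
        = (∑ i, h₀ i ^ 2) • (Bᵀ * B) := by
      calc (∑ i, h i ^ 2) • (1 : Matrix (Fin K) (Fin K) ℝ)
          = (Matrix.of fun i k => (Φ k).mulVec h i)ᵀ * (Matrix.of fun i k => (Φ k).mulVec h i) := g1.symm
        _ = Bᵀ * ((Matrix.of fun i k => (Φ k).mulVec h₀ i)ᵀ * (Matrix.of fun i k => (Φ k).mulVec h₀ i)) * B := by
            rw [hAB, Matrix.transpose_mul]; simp only [Matrix.mul_assoc]
        _ = Bᵀ * ((∑ i, h₀ i ^ 2) • (1 : Matrix (Fin K) (Fin K) ℝ)) * B := by rw [g0]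
        _ = (∑ i, h₀ i ^ 2) • (Bᵀ * B) := by
            rw [Matrix.mul_smul, Matrix.mul_one, Matrix.smul_mul]
    calc Bᵀ * B = ((∑ i, h₀ i ^ 2)⁻¹ * (∑ i, h₀ i ^ 2)) • (Bᵀ * B) := by
          rw [inv_mul_cancel₀ (ne_of_gt hpos), one_smul]
      _ = (∑ i, h₀ i ^ 2)⁻¹ • ((∑ i, h₀ i ^ 2) • (Bᵀ * B)) := by rw [smul_smul]
      _ = (∑ i, h₀ i ^ 2)⁻¹ • ((∑ i, h i ^ 2) • (1 : Matrix (Fin K) (Fin K) ℝ)) := by rw [← e]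
      _ = ((∑ i, h i ^ 2) / (∑ i, h₀ i ^ 2)) • (1 : Matrix (Fin K) (Fin K) ℝ) := by
          rw [smul_smul]; congr 1; field_simp
  refine ⟨main, fun hB => ?_⟩
  refine ⟨(∑ i, h i ^ 2) / (∑ i, h₀ i ^ 2), ?_, main⟩
  rcases lt_or_eq_of_le (div_nonneg (Finset.sum_nonneg fun i _ => sq_nonneg _) hpos.le) with hlt | heq
  · exact hlt
  · exfalso
    apply hB
    have h0 : Bᵀ * B = 0 := by rw [main, ← heq, zero_smul]
    ext i j
    have := congrFun (congrFun h0 j) j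
    simp only [mul_apply, transpose_apply, Matrix.zero_apply] at this
    have hall : ∀ x ∈ Finset.univ, B x j * B x j = 0 := by
      intro x _
      have hnn : ∀ x ∈ (Finset.univ : Finset (Fin K)), 0 ≤ B x j * B x j :=
        fun x _ => mul_self_nonneg _
      exact (Finset.sum_eq_zero_iff_of_nonneg hnn).mp this x (Finset.mem_univ x)
    have := hall i (Finset.mem_univ i)
    have : B i j = 0 := by nlinarith [this]
    simp [this]
end

section
/- Let Φ₁,…,Φ_K ∈ ℝ^{p×r} satisfy Φ_kᵀ Φ_k = I_r and Φ_iᵀ Φ_j + Φ_jᵀ Φ_i = 0 for i ≠ j, let Φ := [Φ₁;…;Φ_K], and fix h₀ ∈ ℝ^r. Define the map T : ℝ^{K×K} → ℝ^r by T(B) := (1/K)·Φᵀ (Bᵀ ⊗ I_p) Φ h₀. Then for any B₁, B₂ ∈ ℝ^{K×K} such that A(T(B_i)) = A(h₀)B_i for i = 1,2, one has T(B₁)ᵀ T(B₂) = (‖h₀‖²/K)·tr(B₁ᵀ B₂). -/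
open Matrix Kronecker

theorem stmt_13 {p r K : ℕ} (Φs : Fin K → Matrix (Fin p) (Fin r) ℝ)
    (horth : ∀ k, (Φs k)ᵀ * Φs k = 1)
    (hanti : ∀ i j, i ≠ j → (Φs i)ᵀ * Φs j + (Φs j)ᵀ * Φs i = 0)
    (Φ : Matrix (Fin K × Fin p) (Fin r) ℝ)
    (hΦ : Φ = Matrix.of fun ki j => Φs ki.1 ki.2 j)
    (h₀ : Fin r → ℝ)
    (T : Matrix (Fin K) (Fin K) ℝ → (Fin r → ℝ))
    (hT : ∀ B, T B = (1 / (K : ℝ)) •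
      Φᵀ.mulVec ((Bᵀ ⊗ₖ (1 : Matrix (Fin p) (Fin p) ℝ)).mulVec (Φ.mulVec h₀)))
    (B₁ B₂ : Matrix (Fin K) (Fin K) ℝ)
    (h₁ : (Matrix.of fun i k => (Φs k).mulVec (T B₁) i)
        = (Matrix.of fun i k => (Φs k).mulVec h₀ i) * B₁)
    (h₂ : (Matrix.of fun i k => (Φs k).mulVec (T B₂) i)
        = (Matrix.of fun i k => (Φs k).mulVec h₀ i) * B₂) :
    dotProduct (T B₁) (T B₂)
      = ((∑ i, h₀ i ^ 2) / (K : ℝ)) * Matrix.trace (B₁ᵀ * B₂) := by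
  classical
  rcases Nat.eq_zero_or_pos K with hK | hK
  · subst hK
    have hT1 : T B₁ = 0 := by simp [hT B₁]
    have hT2 : T B₂ = 0 := by simp [hT B₂]
    simp [hT1, Matrix.trace]
  · have hK0 : (K : ℝ) ≠ 0 := Nat.cast_ne_zero.mpr hK.ne'
    have base : ∀ (l m : Fin K) (u v : Fin r → ℝ),
        (Φs l).mulVec u ⬝ᵥ (Φs m).mulVec v
          = u ⬝ᵥ (((Φs l)ᵀ * Φs m).mulVec v) := by
      intro l m u v
      rw [← Matrix.mulVec_mulVec, Matrix.dotProduct_mulVec,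
        Matrix.dotProduct_mulVec, Matrix.vecMul_transpose,
        Matrix.dotProduct_mulVec]
    have key : ∀ l m, (Φs l).mulVec h₀ ⬝ᵥ (Φs m).mulVec h₀
        = if l = m then (∑ i, h₀ i ^ 2) else 0 := by
      intro l m
      by_cases hlm : l = m
      · subst hlm
        rw [base, horth l, Matrix.one_mulVec]
        simp [dotProduct, pow_two, if_pos rfl]
      · rw [if_neg hlm]
        have hsym : (Φs l).mulVec h₀ ⬝ᵥ (Φs m).mulVec h₀
            = (Φs m).mulVec h₀ ⬝ᵥ (Φs l).mulVec h₀ := dotProduct_comm _ _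
        have h2 : (Φs l).mulVec h₀ ⬝ᵥ (Φs m).mulVec h₀
            + (Φs m).mulVec h₀ ⬝ᵥ (Φs l).mulVec h₀ = 0 := by
          rw [base, base, ← dotProduct_add, ← Matrix.add_mulVec,
            hanti l m hlm, Matrix.zero_mulVec, dotProduct_zero]
        nlinarith [h2, hsym]
    have expand₁ : ∀ k i, (Φs k).mulVec (T B₁) i
        = ∑ l, (Φs l).mulVec h₀ i * B₁ l k := by
      intro k i
      have := congrFun (congrFun h₁ i) k
      simpa [Matrix.mul_apply] using this
    have expand₂ : ∀ k i, (Φs k).mulVec (T B₂) i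
        = ∑ l, (Φs l).mulVec h₀ i * B₂ l k := by
      intro k i
      have := congrFun (congrFun h₂ i) k
      simpa [Matrix.mul_apply] using this
    have main : (K : ℝ) * (T B₁ ⬝ᵥ T B₂)
        = (∑ i, h₀ i ^ 2) * Matrix.trace (B₁ᵀ * B₂) := by
      have lhs : (K : ℝ) * (T B₁ ⬝ᵥ T B₂)
          = ∑ k, (Φs k).mulVec (T B₁) ⬝ᵥ (Φs k).mulVec (T B₂) := by
        have : ∀ k : Fin K, (Φs k).mulVec (T B₁) ⬝ᵥ (Φs k).mulVec (T B₂)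
            = T B₁ ⬝ᵥ T B₂ := by
          intro k
          rw [base, horth k, Matrix.one_mulVec]
        rw [Finset.sum_congr rfl (fun k _ => this k)]
        simp [mul_comm]
      rw [lhs]
      have rhs : ∑ k, (Φs k).mulVec (T B₁) ⬝ᵥ (Φs k).mulVec (T B₂)
          = ∑ k, ∑ l, ∑ m, (B₁ l k * B₂ m k) *
              ((Φs l).mulVec h₀ ⬝ᵥ (Φs m).mulVec h₀) := by
        refine Finset.sum_congr rfl fun k _ => ?_
        simp only [dotProduct, expand₁, expand₂, Finset.sum_mul_sum]
        rw [Finset.sum_comm]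
        refine Finset.sum_congr rfl fun l _ => ?_
        rw [Finset.sum_comm]
        refine Finset.sum_congr rfl fun m _ => ?_
        rw [Finset.mul_sum]
        exact Finset.sum_congr rfl fun i _ => by ring
      rw [rhs]
      simp only [key, mul_ite, mul_zero, Finset.sum_ite_eq, Finset.mem_univ,
        if_true]
      rw [Matrix.trace, Finset.mul_sum]
      refine Finset.sum_congr rfl fun k _ => ?_
      rw [Matrix.diag_apply, Matrix.mul_apply, Finset.mul_sum]
      exact Finset.sum_congr rfl fun l _ => by
        simp [Matrix.transpose_apply]; ring
    field_simp
    linarith [main]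
end

section
/- Let g : ℝⁿ × Y → ℝ^p be a bilinear map, where Y is a finite-dimensional real vector space, and for x ∈ ℝⁿ let g_x : Y → ℝ^p be the linear map y ↦ g(x,y). Then there exists a nonnegative integer d such that the set {x ∈ ℝⁿ : dim ker(g_x) ≠ d} is contained in the zero set of some nonzero polynomial on ℝⁿ; in particular it has Lebesgue measure zero. -/
open Module MeasureTheory

open MvPolynomial in
lemma mv_null : ∀ (n : ℕ) (P : MvPolynomial (Fin n) ℝ), P ≠ 0 →
    volume {x : Fin n → ℝ | eval x P = 0} = 0 := by
  intro n
  induction n with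
  | zero =>
    intro P hP
    obtain ⟨a, rfl⟩ := MvPolynomial.C_surjective (Fin 0) P
    have ha : a ≠ 0 := fun h => hP (by simp [h])
    convert measure_empty (μ := volume)
    ext x
    simp [ha]
  | succ n ih =>
    intro P hP
    set Q := finSuccEquiv ℝ n P with hQdef
    have hQ0 : Q ≠ 0 := by
      intro h
      apply hP
      have := (finSuccEquiv ℝ n).injective (a₁ := P) (a₂ := 0) (by simpa [hQdef] using h)
      simpa using this
    set c := Q.leadingCoeff with hc
    have hc0 : c ≠ 0 := Polynomial.leadingCoeff_ne_zero.mpr hQ0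
    have hN : volume {y : Fin n → ℝ | eval y c = 0} = 0 := ih c hc0
    -- transfer to product space
    set e := (MeasurableEquiv.piFinSuccAbove (fun _ : Fin (n + 1) => ℝ) 0).symm with he
    have hSmeas : MeasurableSet {x : Fin (n + 1) → ℝ | eval x P = 0} :=
      (MvPolynomial.continuous_eval (p := P)).measurable (measurableSet_singleton 0)
    have hvol : volume {x : Fin (n + 1) → ℝ | eval x P = 0}
        = volume (e ⁻¹' {x : Fin (n + 1) → ℝ | eval x P = 0}) := by
      rw [((volume_preserving_piFinSuccAbove (fun _ : Fin (n + 1) => ℝ) 0).symm).measure_preimage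
        hSmeas.nullMeasurableSet]
    rw [hvol]
    have hpre : e ⁻¹' {x : Fin (n + 1) → ℝ | eval x P = 0}
        = {ty : ℝ × (Fin n → ℝ) | eval (Fin.cons ty.1 ty.2) P = 0} := by
      ext ⟨t, y⟩
      simp [he, MeasurableEquiv.piFinSuccAbove_symm_apply, Fin.insertNthEquiv,
        Fin.insertNth_zero]
    rw [hpre]
    -- split according to vanishing of the leading coefficient
    have hsub : {ty : ℝ × (Fin n → ℝ) | eval (Fin.cons ty.1 ty.2) P = 0}
        ⊆ (Set.univ ×ˢ {y : Fin n → ℝ | eval y c = 0}) ∪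
          (Prod.swap ⁻¹' {yt : (Fin n → ℝ) × ℝ |
            eval yt.1 c ≠ 0 ∧ eval (Fin.cons yt.2 yt.1) P = 0}) := by
      rintro ⟨t, y⟩ h
      by_cases hy : eval y c = 0
      · exact Or.inl ⟨trivial, hy⟩
      · exact Or.inr ⟨hy, h⟩
    refine measure_mono_null hsub (measure_union_null ?_ ?_)
    · rw [Measure.volume_eq_prod, Measure.prod_prod, hN, mul_zero]
    · have hT2meas : MeasurableSet {yt : (Fin n → ℝ) × ℝ |
          eval yt.1 c ≠ 0 ∧ eval (Fin.cons yt.2 yt.1) P = 0} := by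
        apply MeasurableSet.inter
        · exact ((MvPolynomial.continuous_eval (p := c)).comp
            continuous_fst).measurable (measurableSet_singleton 0) |>.compl
        · exact ((MvPolynomial.continuous_eval (p := P)).comp
            ((continuous_pi fun i => Fin.cases continuous_snd
              (fun j => (continuous_apply j).comp continuous_fst) i))).measurable
            (measurableSet_singleton 0)
      rw [Measure.volume_eq_prod,
        (Measure.measurePreserving_swap (μ := (volume : Measure ℝ))
          (ν := (volume : Measure (Fin n → ℝ)))).measure_preimage hT2meas.nullMeasurableSet]
      rw [Measure.measure_prod_null hT2meas]
      · refine Filter.Eventually.of_forall fun y => ?_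
        by_cases hy : eval y c = 0
        · exact measure_mono_null (fun t ht => (ht.1 hy).elim)
            (measure_empty (μ := volume))
        · have hQy : Q.map (eval y) ≠ 0 := by
            intro h
            apply hy
            have h2 : (Q.map (eval y)).coeff Q.natDegree = 0 := by rw [h]; simp
            rw [Polynomial.coeff_map] at h2
            exact h2
          refine measure_mono_null ?_ ((Polynomial.finite_setOf_isRoot hQy).measure_zero volume)
          intro t ht
          have := ht.2
          rw [MvPolynomial.eval_eq_eval_mv_eval'] at this
          exact this

open Matrix in
lemma rank_row_select {ι κ : Type*} [Fintype ι] [Fintype κ] {r : ℕ}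
    (A : Matrix ι κ ℝ) (f : Fin r → ι) :
    (A.submatrix f id).rank ≤ A.rank := by
  rw [rank_eq_finrank_span_row, rank_eq_finrank_span_row]
  apply Submodule.finrank_mono
  apply Submodule.span_mono
  rintro _ ⟨i, rfl⟩
  exact ⟨f i, rfl⟩

open Matrix in
lemma rank_submatrix_le'' {ι κ : Type*} [Fintype ι] [Fintype κ] {r s : ℕ}
    (A : Matrix ι κ ℝ) (f : Fin r → ι) (g : Fin s → κ) :
    (A.submatrix f g).rank ≤ A.rank := by
  have h1 : (A.submatrix f g) = (((A.submatrix f id)ᵀ).submatrix g id)ᵀ := rfl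
  calc (A.submatrix f g).rank = (((A.submatrix f id)ᵀ).submatrix g id).rank := by
        rw [h1, rank_transpose]
    _ ≤ (A.submatrix f id)ᵀ.rank := rank_row_select _ g
    _ = (A.submatrix f id).rank := rank_transpose _
    _ ≤ A.rank := rank_row_select _ f

open Matrix in
lemma exists_cols {ι κ : Type*} [Fintype ι] [Fintype κ] {r : ℕ}
    (A : Matrix ι κ ℝ) (h : A.rank = r) :
    ∃ g : Fin r → κ, (A.submatrix id g).rank = r := by
  subst h
  obtain ⟨s, hst, hsp, hli⟩ := exists_linearIndependent ℝ (Set.range Aᵀ)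
  have hsfin : s.Finite := (Set.finite_range Aᵀ).subset hst
  haveI := hsfin.fintype
  have hcard : Fintype.card s = A.rank := by
    rw [rank_eq_finrank_span_cols, Matrix.col_def, ← hsp, finrank_span_set_eq_card hli, Set.toFinset_card]
  choose φ hφ using fun v : s => hst v.2
  let e := (Fintype.equivFinOfCardEq hcard).symm
  refine ⟨φ ∘ e, ?_⟩
  have hr : Set.range ((A.submatrix id (φ ∘ e))ᵀ) = s := by
    have heq : (A.submatrix id (φ ∘ e))ᵀ = fun j => Aᵀ (φ (e j)) := rfl
    rw [heq]
    ext v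
    constructor
    · rintro ⟨j, rfl⟩
      simp only [hφ]
      exact (e j).2
    · intro hv
      exact ⟨e.symm ⟨v, hv⟩, by simp only [Equiv.apply_symm_apply, hφ]⟩
  rw [rank_eq_finrank_span_cols, Matrix.col_def, hr, hsp, rank_eq_finrank_span_cols, Matrix.col_def]

open Matrix in
lemma rank_eq_of_det_ne {r : ℕ} (A : Matrix (Fin r) (Fin r) ℝ) (h : A.det ≠ 0) :
    A.rank = r := by
  have : IsUnit A := (Matrix.isUnit_iff_isUnit_det A).mpr (isUnit_iff_ne_zero.mpr h)
  simpa using rank_of_isUnit A this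

open Matrix in
lemma det_ne_of_rank {r : ℕ} (A : Matrix (Fin r) (Fin r) ℝ) (h : A.rank = r) :
    A.det ≠ 0 := by
  intro hdet
  obtain ⟨v, hv, hAv⟩ := (Matrix.exists_mulVec_eq_zero_iff).mpr hdet
  have hrange : LinearMap.range A.mulVecLin = ⊤ := by
    apply Submodule.eq_top_of_finrank_eq
    rw [show finrank ℝ (LinearMap.range A.mulVecLin) = A.rank from rfl, h,
      Module.finrank_fin_fun]
  have hsurj : Function.Surjective A.mulVecLin := LinearMap.range_eq_top.mp hrange
  have hinj := (LinearMap.injective_iff_surjective (f := A.mulVecLin)).mpr hsurj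
  apply hv
  have : A.mulVecLin v = A.mulVecLin 0 := by simpa [Matrix.mulVecLin_apply] using hAv
  exact hinj this

open Matrix in
lemma exists_minor {ι κ : Type*} [Fintype ι] [Fintype κ] {r : ℕ}
    (A : Matrix ι κ ℝ) (h : A.rank = r) :
    ∃ (f : Fin r → ι) (g : Fin r → κ), (A.submatrix f g).det ≠ 0 := by
  obtain ⟨g, hg⟩ := exists_cols A h
  have ht : ((A.submatrix id g)ᵀ).rank = r := by rw [rank_transpose]; exact hg
  obtain ⟨f, hf⟩ := exists_cols ((A.submatrix id g)ᵀ) ht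
  refine ⟨f, g, ?_⟩
  have hEq : ((A.submatrix id g)ᵀ.submatrix id f) = (A.submatrix f g)ᵀ := rfl
  have h1 : ((A.submatrix f g)ᵀ).rank = r := by rw [← hEq]; exact hf
  have h2 : (A.submatrix f g).rank = r := by rw [← rank_transpose]; exact h1
  exact det_ne_of_rank _ h2

theorem stmt_14 {n p : ℕ} (Y : Type*) [AddCommGroup Y] [Module ℝ Y]
    [FiniteDimensional ℝ Y]
    (g : (Fin n → ℝ) →ₗ[ℝ] Y →ₗ[ℝ] (Fin p → ℝ)) :
    ∃ d : ℕ, ∃ P : MvPolynomial (Fin n) ℝ, P ≠ 0 ∧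
      {x : Fin n → ℝ | finrank ℝ (LinearMap.ker (g x)) ≠ d}
        ⊆ {x : Fin n → ℝ | MvPolynomial.eval x P = 0} ∧
      volume {x : Fin n → ℝ | finrank ℝ (LinearMap.ker (g x)) ≠ d} = 0 := by
  classical
  set m := finrank ℝ Y with hm
  let b : Basis (Fin m) ℝ Y := finBasis ℝ Y
  let Mlin : (Fin n → ℝ) →ₗ[ℝ] Matrix (Fin p) (Fin m) ℝ :=
    (LinearMap.toMatrix b (Pi.basisFun ℝ (Fin p))).toLinearMap.comp g
  have hbdd : BddAbove (Set.range fun x => (Mlin x).rank) := by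
    refine ⟨m, ?_⟩
    rintro _ ⟨x, rfl⟩
    simpa using (Mlin x).rank_le_card_width
  set r := sSup (Set.range fun x => (Mlin x).rank) with hr
  obtain ⟨x0, hx0⟩ : ∃ x0, (Mlin x0).rank = r :=
    Nat.sSup_mem (Set.range_nonempty _) hbdd
  have hle : ∀ x, (Mlin x).rank ≤ r := fun x => le_csSup hbdd ⟨x, rfl⟩
  obtain ⟨f, gc, hdet⟩ := exists_minor (Mlin x0) hx0
  have hentry : ∀ (x : Fin n → ℝ) (i : Fin p) (j : Fin m),
      Mlin x i j = ∑ k, x k * Mlin (fun l => if k = l then 1 else 0) i j := by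
    intro x i j
    rw [LinearMap.pi_apply_eq_sum_univ Mlin x]
    simp [Matrix.sum_apply, Matrix.smul_apply, smul_eq_mul]
  let Qm : Matrix (Fin r) (Fin r) (MvPolynomial (Fin n) ℝ) :=
    fun i j => ∑ k, MvPolynomial.C (Mlin (fun l => if k = l then 1 else 0) (f i) (gc j)) *
      MvPolynomial.X k
  have hev : ∀ x : Fin n → ℝ,
      MvPolynomial.eval x Qm.det = ((Mlin x).submatrix f gc).det := by
    intro x
    rw [RingHom.map_det]
    congr 1
    ext i j
    rw [RingHom.mapMatrix_apply, Matrix.map_apply]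
    simp only [Qm, map_sum, map_mul, MvPolynomial.eval_C, MvPolynomial.eval_X,
      Matrix.submatrix_apply]
    rw [hentry x (f i) (gc j)]
    exact Finset.sum_congr rfl fun k _ => (mul_comm _ _)
  -- the rank of `g x` as a linear map equals the rank of the matrix
  have hrank : ∀ x : Fin n → ℝ, finrank ℝ (LinearMap.range (g x)) = (Mlin x).rank := by
    intro x
    have : Mlin x = LinearMap.toMatrix b (Pi.basisFun ℝ (Fin p)) (g x) := rfl
    rw [Matrix.rank_eq_finrank_range_toLin (Mlin x) (Pi.basisFun ℝ (Fin p)) b, this,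
      Matrix.toLin_toMatrix]
  have hker : ∀ x : Fin n → ℝ, MvPolynomial.eval x Qm.det ≠ 0 →
      finrank ℝ (LinearMap.ker (g x)) = m - r := by
    intro x hx
    rw [hev] at hx
    have h1 : r ≤ (Mlin x).rank := by
      have := rank_eq_of_det_ne _ hx
      calc r = ((Mlin x).submatrix f gc).rank := this.symm
        _ ≤ (Mlin x).rank := rank_submatrix_le'' _ _ _
    have h2 : (Mlin x).rank = r := le_antisymm (hle x) h1
    have h3 := LinearMap.finrank_range_add_finrank_ker (g x)
    rw [hrank x, h2, ← hm] at h3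
    omega
  have hsub : {x : Fin n → ℝ | finrank ℝ (LinearMap.ker (g x)) ≠ m - r}
      ⊆ {x : Fin n → ℝ | MvPolynomial.eval x Qm.det = 0} := by
    intro x hx
    by_contra hne
    exact hx (hker x hne)
  have hP0 : Qm.det ≠ 0 := by
    intro h
    apply hdet
    have := hev x0
    rw [h] at this
    simpa using this.symm
  exact ⟨m - r, Qm.det, hP0, hsub, measure_mono_null hsub (mv_null n Qm.det hP0)⟩
end

section
/- Let V be a linear subspace of ℝ^{K×K} with K even, containing I_K, such that every nonzero B ∈ V satisfies Bᵀ B = c·I_K for some c > 0. Then every nonzero B ∈ V has det(B) > 0, i.e., B is a pure rotation up to a positive multiplicative constant. -/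
open Matrix

theorem stmt_18 {K : ℕ} (hK : Even K) (V : Submodule ℝ (Matrix (Fin K) (Fin K) ℝ))
    (hI : (1 : Matrix (Fin K) (Fin K) ℝ) ∈ V)
    (horth : ∀ B ∈ V, B ≠ 0 → ∃ c : ℝ, 0 < c ∧ Bᵀ * B = c • (1 : Matrix (Fin K) (Fin K) ℝ)) :
    ∀ B ∈ V, B ≠ 0 → 0 < Matrix.det B := by
  have hdet : ∀ B ∈ V, B ≠ 0 → Matrix.det B ≠ 0 := by
    intro B hB hB0
    obtain ⟨c, hc, hcB⟩ := horth B hB hB0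
    have h1 : Matrix.det B ^ 2 = c ^ K := by
      have := congrArg Matrix.det hcB
      simpa [Matrix.det_mul, Matrix.det_transpose, sq] using this
    intro hd
    rw [hd] at h1
    simp at h1
    exact absurd h1.symm (ne_of_gt (pow_pos hc K))
  intro B hB hB0
  by_cases hs : ∃ l : ℝ, B = l • (1 : Matrix (Fin K) (Fin K) ℝ)
  · obtain ⟨l, rfl⟩ := hs
    have hl : l ≠ 0 := by
      rintro rfl; simp at hB0
    rw [Matrix.det_smul, Matrix.det_one, mul_one]
    simpa [Fintype.card_fin] using hK.pow_pos hl
  · set g : ℝ → ℝ := fun s => Matrix.det (s • (1 : Matrix (Fin K) (Fin K) ℝ) + B) with hg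
    have hgc : Continuous g := by
      apply Continuous.matrix_det
      exact (continuous_id.smul continuous_const).add continuous_const
    have hgne : ∀ s, g s ≠ 0 := by
      intro s
      apply hdet _ (V.add_mem (V.smul_mem s hI) hB)
      intro h0
      apply hs
      refine ⟨-s, ?_⟩
      rw [eq_neg_of_add_eq_zero_right h0, neg_smul]
    have htend : Filter.Tendsto
        (fun s : ℝ => Matrix.det ((1 : Matrix (Fin K) (Fin K) ℝ) + s⁻¹ • B))
        Filter.atTop (nhds 1) := by
      have h1 : Filter.Tendsto (fun s : ℝ => (1 : Matrix (Fin K) (Fin K) ℝ) + s⁻¹ • B)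
          Filter.atTop (nhds (1 + (0 : ℝ) • B)) :=
        Filter.Tendsto.const_add _ (tendsto_inv_atTop_zero.smul_const B)
      have hcd : Continuous fun M : Matrix (Fin K) (Fin K) ℝ => M.det :=
        Continuous.matrix_det continuous_id
      have := (hcd.tendsto _).comp h1
      simpa [Function.comp_def] using this
    have hev : ∀ᶠ s in Filter.atTop,
        0 < Matrix.det ((1 : Matrix (Fin K) (Fin K) ℝ) + s⁻¹ • B) :=
      htend.eventually (eventually_gt_nhds zero_lt_one)
    obtain ⟨s, hs1, hspos⟩ := (hev.and (Filter.eventually_gt_atTop 0)).exists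
    have hgs : 0 < g s := by
      have hsne : s ≠ 0 := ne_of_gt hspos
      have hrw : s • (1 : Matrix (Fin K) (Fin K) ℝ) + B
          = s • ((1 : Matrix (Fin K) (Fin K) ℝ) + s⁻¹ • B) := by
        rw [smul_add, smul_inv_smul₀ hsne]
      show 0 < Matrix.det (s • (1 : Matrix (Fin K) (Fin K) ℝ) + B)
      rw [hrw, Matrix.det_smul]
      simp only [Fintype.card_fin]
      exact mul_pos (pow_pos hspos K) hs1
    by_contra hneg
    push_neg at hneg
    have hg0 : g 0 < 0 := by
      have hle : g 0 ≤ 0 := by simpa [hg] using hneg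
      exact lt_of_le_of_ne hle (hgne 0)
    obtain ⟨t, _, ht⟩ := intermediate_value_Icc (le_of_lt hspos) hgc.continuousOn
      ⟨le_of_lt hg0, le_of_lt hgs⟩
    exact hgne t ht
end

section
/- For the Alamouti code with coefficient matrices C₁ = I₂, C₂ = i·diag(1,−1), C₃ = [[0,1],[−1,0]], C₄ = i·[[0,1],[1,0]], the set 𝓑* := {B ∈ ℝ^{4×4} : Γ_B = 0}, where Γ_B has blocks Γ_B^k := (1/4)·Σ_{i=1}^{4} Σ_{j=1}^{4} b_{ji} C_k C_iᴴ C_j − Σ_{l=1}^{4} b_{lk} C_l for k = 1,…,4, is a 4-dimensional linear subspace of ℝ^{4×4}. -/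
open Matrix

/-- The coefficient matrices of the Alamouti code. -/
noncomputable def alamouti : Fin 4 → Matrix (Fin 2) (Fin 2) ℂ :=
  ![!![1, 0; 0, 1],
    !![Complex.I, 0; 0, -Complex.I],
    !![0, 1; -1, 0],
    !![0, Complex.I; Complex.I, 0]]

/-- The matrix `Γ_B^k` associated with an OSTB code with coefficient
matrices `C` and a real matrix `B`. -/
noncomputable def GammaBlock {L N K : ℕ} (C : Fin K → Matrix (Fin L) (Fin N) ℂ)
    (B : Matrix (Fin K) (Fin K) ℝ) (k : Fin K) : Matrix (Fin L) (Fin N) ℂ :=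
  (1 / (K : ℂ)) • (∑ i, ∑ j, ((B j i : ℝ) : ℂ) • (C k * (C i)ᴴ * C j))
    - ∑ l, ((B l k : ℝ) : ℂ) • C l

private lemma ct2 (a b c d : ℂ) : !![a,b;c,d]ᴴ = !![star a, star c; star b, star d] := by
  ext i j; fin_cases i <;> fin_cases j <;> simp

set_option maxHeartbeats 1000000 in
private lemma gam0 (B : Matrix (Fin 4) (Fin 4) ℝ) :
    GammaBlock alamouti B 0 =
      !![(((-3/4) * B 0 0 + (1/4) * B 1 1 + (1/4) * B 2 2 + (1/4) * B 3 3 : ℝ) : ℂ) + (((-1/4) * B 0 1 + (-3/4) * B 1 0 + (1/4) * B 2 3 + (-1/4) * B 3 2 : ℝ) : ℂ) * Complex.I,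
         (((-1/4) * B 0 2 + (-1/4) * B 1 3 + (-3/4) * B 2 0 + (1/4) * B 3 1 : ℝ) : ℂ) + (((-1/4) * B 0 3 + (1/4) * B 1 2 + (-1/4) * B 2 1 + (-3/4) * B 3 0 : ℝ) : ℂ) * Complex.I;
         (((1/4) * B 0 2 + (1/4) * B 1 3 + (3/4) * B 2 0 + (-1/4) * B 3 1 : ℝ) : ℂ) + (((-1/4) * B 0 3 + (1/4) * B 1 2 + (-1/4) * B 2 1 + (-3/4) * B 3 0 : ℝ) : ℂ) * Complex.I,
         (((-3/4) * B 0 0 + (1/4) * B 1 1 + (1/4) * B 2 2 + (1/4) * B 3 3 : ℝ) : ℂ) + (((1/4) * B 0 1 + (3/4) * B 1 0 + (-1/4) * B 2 3 + (1/4) * B 3 2 : ℝ) : ℂ) * Complex.I] := by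
  ext r s
  fin_cases r <;> fin_cases s <;>
    · simp only [GammaBlock, alamouti, Fin.sum_univ_four]
      simp [ct2, Complex.star_def, Complex.conj_I, Matrix.mul_fin_two,
        Matrix.sum_apply, Matrix.smul_apply, Matrix.sub_apply]
      ring

set_option maxHeartbeats 1000000 in
private lemma gam1 (B : Matrix (Fin 4) (Fin 4) ℝ) :
    GammaBlock alamouti B 1 =
      !![(((-3/4) * B 0 1 + (-1/4) * B 1 0 + (-1/4) * B 2 3 + (1/4) * B 3 2 : ℝ) : ℂ) + (((1/4) * B 0 0 + (-3/4) * B 1 1 + (1/4) * B 2 2 + (1/4) * B 3 3 : ℝ) : ℂ) * Complex.I,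
         (((1/4) * B 0 3 + (-1/4) * B 1 2 + (-3/4) * B 2 1 + (-1/4) * B 3 0 : ℝ) : ℂ) + (((-1/4) * B 0 2 + (-1/4) * B 1 3 + (1/4) * B 2 0 + (-3/4) * B 3 1 : ℝ) : ℂ) * Complex.I;
         (((-1/4) * B 0 3 + (1/4) * B 1 2 + (3/4) * B 2 1 + (1/4) * B 3 0 : ℝ) : ℂ) + (((-1/4) * B 0 2 + (-1/4) * B 1 3 + (1/4) * B 2 0 + (-3/4) * B 3 1 : ℝ) : ℂ) * Complex.I,
         (((-3/4) * B 0 1 + (-1/4) * B 1 0 + (-1/4) * B 2 3 + (1/4) * B 3 2 : ℝ) : ℂ) + (((-1/4) * B 0 0 + (3/4) * B 1 1 + (-1/4) * B 2 2 + (-1/4) * B 3 3 : ℝ) : ℂ) * Complex.I] := by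
  ext r s
  fin_cases r <;> fin_cases s <;>
    · simp only [GammaBlock, alamouti, Fin.sum_univ_four]
      simp [ct2, Complex.star_def, Complex.conj_I, Matrix.mul_fin_two,
        Matrix.sum_apply, Matrix.smul_apply, Matrix.sub_apply]
      ring

set_option maxHeartbeats 1000000 in
private lemma gam2 (B : Matrix (Fin 4) (Fin 4) ℝ) :
    GammaBlock alamouti B 2 =
      !![(((-3/4) * B 0 2 + (1/4) * B 1 3 + (-1/4) * B 2 0 + (-1/4) * B 3 1 : ℝ) : ℂ) + (((-1/4) * B 0 3 + (-3/4) * B 1 2 + (-1/4) * B 2 1 + (1/4) * B 3 0 : ℝ) : ℂ) * Complex.I,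
         (((1/4) * B 0 0 + (1/4) * B 1 1 + (-3/4) * B 2 2 + (1/4) * B 3 3 : ℝ) : ℂ) + (((1/4) * B 0 1 + (-1/4) * B 1 0 + (-1/4) * B 2 3 + (-3/4) * B 3 2 : ℝ) : ℂ) * Complex.I;
         (((-1/4) * B 0 0 + (-1/4) * B 1 1 + (3/4) * B 2 2 + (-1/4) * B 3 3 : ℝ) : ℂ) + (((1/4) * B 0 1 + (-1/4) * B 1 0 + (-1/4) * B 2 3 + (-3/4) * B 3 2 : ℝ) : ℂ) * Complex.I,
         (((-3/4) * B 0 2 + (1/4) * B 1 3 + (-1/4) * B 2 0 + (-1/4) * B 3 1 : ℝ) : ℂ) + (((1/4) * B 0 3 + (3/4) * B 1 2 + (1/4) * B 2 1 + (-1/4) * B 3 0 : ℝ) : ℂ) * Complex.I] := by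
  ext r s
  fin_cases r <;> fin_cases s <;>
    · simp only [GammaBlock, alamouti, Fin.sum_univ_four]
      simp [ct2, Complex.star_def, Complex.conj_I, Matrix.mul_fin_two,
        Matrix.sum_apply, Matrix.smul_apply, Matrix.sub_apply]
      ring

set_option maxHeartbeats 1000000 in
private lemma gam3 (B : Matrix (Fin 4) (Fin 4) ℝ) :
    GammaBlock alamouti B 3 =
      !![(((-3/4) * B 0 3 + (-1/4) * B 1 2 + (1/4) * B 2 1 + (-1/4) * B 3 0 : ℝ) : ℂ) + (((1/4) * B 0 2 + (-3/4) * B 1 3 + (-1/4) * B 2 0 + (-1/4) * B 3 1 : ℝ) : ℂ) * Complex.I,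
         (((-1/4) * B 0 1 + (1/4) * B 1 0 + (-3/4) * B 2 3 + (-1/4) * B 3 2 : ℝ) : ℂ) + (((1/4) * B 0 0 + (1/4) * B 1 1 + (1/4) * B 2 2 + (-3/4) * B 3 3 : ℝ) : ℂ) * Complex.I;
         (((1/4) * B 0 1 + (-1/4) * B 1 0 + (3/4) * B 2 3 + (1/4) * B 3 2 : ℝ) : ℂ) + (((1/4) * B 0 0 + (1/4) * B 1 1 + (1/4) * B 2 2 + (-3/4) * B 3 3 : ℝ) : ℂ) * Complex.I,
         (((-3/4) * B 0 3 + (-1/4) * B 1 2 + (1/4) * B 2 1 + (-1/4) * B 3 0 : ℝ) : ℂ) + (((-1/4) * B 0 2 + (3/4) * B 1 3 + (1/4) * B 2 0 + (1/4) * B 3 1 : ℝ) : ℂ) * Complex.I] := by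
  ext r s
  fin_cases r <;> fin_cases s <;>
    · simp only [GammaBlock, alamouti, Fin.sum_univ_four]
      simp [ct2, Complex.star_def, Complex.conj_I, Matrix.mul_fin_two,
        Matrix.sum_apply, Matrix.smul_apply, Matrix.sub_apply]
      ring

/-- The linear conditions characterising `Γ_B = 0`. -/
private def Qcond (B : Matrix (Fin 4) (Fin 4) ℝ) : Prop :=
  B 0 0 = B 3 3 ∧ B 0 1 = B 3 2 ∧ B 0 2 = -B 3 1 ∧ B 0 3 = -B 3 0 ∧
  B 1 0 = -B 3 2 ∧ B 1 1 = B 3 3 ∧ B 1 2 = B 3 0 ∧ B 1 3 = -B 3 1 ∧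
  B 2 0 = B 3 1 ∧ B 2 1 = -B 3 0 ∧ B 2 2 = B 3 3 ∧ B 2 3 = -B 3 2

set_option maxHeartbeats 4000000 in
private lemma gammaZero_iff (B : Matrix (Fin 4) (Fin 4) ℝ) :
    (∀ k : Fin 4, GammaBlock alamouti B k = 0) ↔ Qcond B := by
  constructor
  · intro h
    have h0 := (gam0 B).symm.trans (h 0)
    have h1 := (gam1 B).symm.trans (h 1)
    have h2 := (gam2 B).symm.trans (h 2)
    have h3 := (gam3 B).symm.trans (h 3)
    have e0 := congrFun (congrFun h0 0) 0
    have e1 := congrFun (congrFun h0 0) 1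
    have e4 := congrFun (congrFun h1 0) 0
    have e5 := congrFun (congrFun h1 0) 1
    have e8 := congrFun (congrFun h2 0) 0
    have e9 := congrFun (congrFun h2 0) 1
    have e12 := congrFun (congrFun h3 0) 0
    have e13 := congrFun (congrFun h3 0) 1
    simp [Complex.ext_iff] at e0 e1 e4 e5 e8 e9 e12 e13
    obtain ⟨a0, b0⟩ := e0
    obtain ⟨a1, b1⟩ := e1
    obtain ⟨a4, b4⟩ := e4
    obtain ⟨a5, b5⟩ := e5
    obtain ⟨a8, b8⟩ := e8
    obtain ⟨a9, b9⟩ := e9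
    obtain ⟨a12, b12⟩ := e12
    obtain ⟨a13, b13⟩ := e13
    clear h h0 h1 h2 h3
    refine ⟨?_, ?_, ?_, ?_, ?_, ?_, ?_, ?_, ?_, ?_, ?_, ?_⟩ <;> linarith
  · rintro ⟨q1, q2, q3, q4, q5, q6, q7, q8, q9, q10, q11, q12⟩
    have key : ∀ m, GammaBlock alamouti B m = !![0,0;0,0] → GammaBlock alamouti B m = 0 := by
      intro m hm; rw [hm]; ext r s; fin_cases r <;> fin_cases s <;> simp
    have g0 : GammaBlock alamouti B 0 = 0 := by
      rw [gam0, q1, q2, q3, q4, q5, q6, q7, q8, q9, q10, q11, q12]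
      ext r s
      fin_cases r <;> fin_cases s <;>
        · simp
          push_cast
          ring_nf
    have g1 : GammaBlock alamouti B 1 = 0 := by
      rw [gam1, q1, q2, q3, q4, q5, q6, q7, q8, q9, q10, q11, q12]
      ext r s
      fin_cases r <;> fin_cases s <;>
        · simp
          push_cast
          ring_nf
    have g2 : GammaBlock alamouti B 2 = 0 := by
      rw [gam2, q1, q2, q3, q4, q5, q6, q7, q8, q9, q10, q11, q12]
      ext r s
      fin_cases r <;> fin_cases s <;>
        · simp
          push_cast
          ring_nf
    have g3 : GammaBlock alamouti B 3 = 0 := by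
      rw [gam3, q1, q2, q3, q4, q5, q6, q7, q8, q9, q10, q11, q12]
      ext r s
      fin_cases r <;> fin_cases s <;>
        · simp
          push_cast
          ring_nf
    intro k
    fin_cases k
    · exact g0
    · exact g1
    · exact g2
    · exact g3

/-- Basis of the solution space. -/
private noncomputable def vbas : Fin 4 → Matrix (Fin 4) (Fin 4) ℝ :=
  ![!![0,0,0,-1; 0,0,1,0; 0,-1,0,0; 1,0,0,0],
    !![0,0,-1,0; 0,0,0,-1; 1,0,0,0; 0,1,0,0],
    !![0,1,0,0; -1,0,0,0; 0,0,0,-1; 0,0,1,0],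
    !![1,0,0,0; 0,1,0,0; 0,0,1,0; 0,0,0,1]]

private lemma vbas_li : LinearIndependent ℝ vbas := by
  rw [Fintype.linearIndependent_iff]
  intro g hg
  have h0 := congrFun (congrFun hg 3) 0
  have h1 := congrFun (congrFun hg 3) 1
  have h2 := congrFun (congrFun hg 3) 2
  have h3 := congrFun (congrFun hg 3) 3
  simp [Fin.sum_univ_four, vbas, Matrix.vecHead, Matrix.vecTail] at h0 h1 h2 h3
  intro i; fin_cases i <;> simp <;> linarith

set_option maxHeartbeats 1000000 in
theorem stmt_19 :
    ∃ V : Submodule ℝ (Matrix (Fin 4) (Fin 4) ℝ),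
      (V : Set (Matrix (Fin 4) (Fin 4) ℝ))
        = {B | ∀ k : Fin 4, GammaBlock alamouti B k = 0} ∧
      Module.finrank ℝ V = 4 := by
  refine ⟨Submodule.span ℝ (Set.range vbas), ?_, ?_⟩
  · ext B
    simp only [SetLike.mem_coe, Set.mem_setOf_eq, Submodule.mem_span_range_iff_exists_fun,
      gammaZero_iff]
    constructor
    · rintro ⟨c, rfl⟩
      refine ⟨?_, ?_, ?_, ?_, ?_, ?_, ?_, ?_, ?_, ?_, ?_, ?_⟩ <;>
        · simp [Fin.sum_univ_four, vbas, Matrix.vecHead, Matrix.vecTail]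
          try ring
    · rintro ⟨q1, q2, q3, q4, q5, q6, q7, q8, q9, q10, q11, q12⟩
      refine ⟨![B 3 0, B 3 1, B 3 2, B 3 3], ?_⟩
      ext r s
      fin_cases r <;> fin_cases s <;>
        · simp [Fin.sum_univ_four, vbas, Matrix.vecHead, Matrix.vecTail]
          try linarith
  · rw [finrank_span_eq_card vbas_li]
    simp
end
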